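/- If coherent words P_1…P_n and Q_1…Q_m of starters and terminators are equivalent under the congruence ~, then their gluings agree: P_1*…*P_n ≅ Q_1*…*Q_m. -/

import Mathlib

set_option maxHeartbeats 1000000

universe u v w

/-- An ipomset over event universe `E` and alphabet `A`:
a finite set of events with a precedence order `lt`, an event order `evord`,
source and target sets, and a labeling. -/
structure Ipomset (E : Type u) (A : Type v) where
  events : Finset E
  lt : E → E → Prop
  evord : E → E → Prop
  src : Finset E
  tgt : Finset E
  lab : E → A
  lt_mem : ∀ {x y}, lt x y → x ∈ events ∧ y ∈ events
  evord_mem : ∀ {x y}, evord x y → x ∈ events ∧ y ∈ events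
  lt_irrefl : ∀ x, ¬ lt x x
  lt_trans : ∀ {x y z}, lt x y → lt y z → lt x z
  evord_irrefl : ∀ x, ¬ evord x x
  evord_trans : ∀ {x y z}, evord x y → evord y z → evord x z
  order_total : ∀ {x y}, x ∈ events → y ∈ events → x ≠ y →
      lt x y ∨ lt y x ∨ evord x y ∨ evord y x
  src_sub : src ⊆ events
  tgt_sub : tgt ⊆ events
  src_min : ∀ {x y}, x ∈ src → ¬ lt y x
  tgt_max : ∀ {x y}, x ∈ tgt → ¬ lt x y

namespace Ipomset

variable {E : Type u} {A : Type v}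

/-- An ipomset is interval if its precedence order admits an interval representation. -/
def Interval (P : Ipomset E A) : Prop :=
  ∃ b e : E → ℝ, (∀ x ∈ P.events, b x ≤ e x) ∧
    ∀ x ∈ P.events, ∀ y ∈ P.events, (P.lt x y ↔ e x < b y)

/-- Discrete: empty precedence order. -/
def Discrete (P : Ipomset E A) : Prop := ∀ x y, ¬ P.lt x y

/-- A starter is a discrete ipomset with `tgt = events`. -/
def Starter (P : Ipomset E A) : Prop := P.Discrete ∧ P.tgt = P.events

/-- A terminator is a discrete ipomset with `src = events`. -/
def Terminator (P : Ipomset E A) : Prop := P.Discrete ∧ P.src = P.events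

/-- An identity is a discrete ipomset with `src = tgt = events`. -/
def IsIdentity (P : Ipomset E A) : Prop :=
  P.Discrete ∧ P.src = P.events ∧ P.tgt = P.events

end Ipomset

/-- A conclist: a finite set with a strict total order (the event order) and labeling. -/
structure Conclist (E : Type u) (A : Type v) where
  events : Finset E
  evord : E → E → Prop
  lab : E → Option A
  evord_mem : ∀ {x y}, evord x y → x ∈ events ∧ y ∈ events
  evord_irrefl : ∀ x, ¬ evord x x
  evord_trans : ∀ {x y z}, evord x y → evord y z → evord x z
  evord_total : ∀ {x y}, x ∈ events → y ∈ events → x ≠ y → evord x y ∨ evord y x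

variable {E : Type u} {A : Type v}

/-- The source interface of an ipomset: the conclist on its source set. -/
def Ipomset.srcIface [DecidableEq E] (P : Ipomset E A) : Conclist E A where
  events := P.src
  evord x y := x ∈ P.src ∧ y ∈ P.src ∧ P.evord x y
  lab x := if x ∈ P.src then some (P.lab x) else none
  evord_mem h := ⟨h.1, h.2.1⟩
  evord_irrefl x h := P.evord_irrefl x h.2.2
  evord_trans h1 h2 := ⟨h1.1, h2.2.1, P.evord_trans h1.2.2 h2.2.2⟩
  evord_total {x y} hx hy hxy := by
    rcases P.order_total (P.src_sub hx) (P.src_sub hy) hxy with h | h | h | h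
    · exact absurd h (P.src_min hy)
    · exact absurd h (P.src_min hx)
    · exact Or.inl ⟨hx, hy, h⟩
    · exact Or.inr ⟨hy, hx, h⟩

/-- The target interface of an ipomset: the conclist on its target set. -/
def Ipomset.tgtIface [DecidableEq E] (P : Ipomset E A) : Conclist E A where
  events := P.tgt
  evord x y := x ∈ P.tgt ∧ y ∈ P.tgt ∧ P.evord x y
  lab x := if x ∈ P.tgt then some (P.lab x) else none
  evord_mem h := ⟨h.1, h.2.1⟩
  evord_irrefl x h := P.evord_irrefl x h.2.2
  evord_trans h1 h2 := ⟨h1.1, h2.2.1, P.evord_trans h1.2.2 h2.2.2⟩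
  evord_total {x y} hx hy hxy := by
    rcases P.order_total (P.tgt_sub hx) (P.tgt_sub hy) hxy with h | h | h | h
    · exact absurd h (P.tgt_max hx)
    · exact absurd h (P.tgt_max hy)
    · exact Or.inl ⟨hx, hy, h⟩
    · exact Or.inr ⟨hy, hx, h⟩

/-- `f` is an isomorphism of ipomsets from `P` to `Q`. -/
structure IsIpoIso (P Q : Ipomset E A) (f : E → E) : Prop where
  maps : ∀ x ∈ P.events, f x ∈ Q.events
  inj : ∀ x ∈ P.events, ∀ y ∈ P.events, f x = f y → x = y
  surj : ∀ y ∈ Q.events, ∃ x ∈ P.events, f x = y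
  src_iff : ∀ x ∈ P.events, (x ∈ P.src ↔ f x ∈ Q.src)
  tgt_iff : ∀ x ∈ P.events, (x ∈ P.tgt ↔ f x ∈ Q.tgt)
  lab_eq : ∀ x ∈ P.events, Q.lab (f x) = P.lab x
  lt_iff : ∀ x ∈ P.events, ∀ y ∈ P.events, (Q.lt (f x) (f y) ↔ P.lt x y)
  evord_iff : ∀ x ∈ P.events, ∀ y ∈ P.events, ¬ P.lt x y → ¬ P.lt y x →
      (P.evord x y ↔ Q.evord (f x) (f y))

/-- `P ≅ Q`: there is an isomorphism of ipomsets from `P` to `Q`. -/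
def IpoIso (P Q : Ipomset E A) : Prop := ∃ f, IsIpoIso P Q f

/-- `f` is a subsumption of ipomsets from `P` to `Q`. -/
structure IsSubsumption (P Q : Ipomset E A) (f : E → E) : Prop where
  maps : ∀ x ∈ P.events, f x ∈ Q.events
  inj : ∀ x ∈ P.events, ∀ y ∈ P.events, f x = f y → x = y
  surj : ∀ y ∈ Q.events, ∃ x ∈ P.events, f x = y
  src_iff : ∀ x ∈ P.events, (x ∈ P.src ↔ f x ∈ Q.src)
  tgt_iff : ∀ x ∈ P.events, (x ∈ P.tgt ↔ f x ∈ Q.tgt)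
  lab_eq : ∀ x ∈ P.events, Q.lab (f x) = P.lab x
  lt_imp : ∀ x ∈ P.events, ∀ y ∈ P.events, Q.lt (f x) (f y) → P.lt x y
  evord_imp : ∀ x ∈ P.events, ∀ y ∈ P.events, ¬ P.lt x y → ¬ P.lt y x →
      P.evord x y → Q.evord (f x) (f y)

/-- `P ⊑ Q`: there is a subsumption from `P` to `Q`. -/
def Subsumes (P Q : Ipomset E A) : Prop := ∃ f, IsSubsumption P Q f

/-- `P ⊏ Q`: `P ⊑ Q` and `P` and `Q` are not isomorphic. -/
def StrictSubsumes (P Q : Ipomset E A) : Prop := Subsumes P Q ∧ ¬ IpoIso P Q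

/-- `f` is an isomorphism of conclists from `U` to `V`. -/
structure IsClIso (U V : Conclist E A) (f : E → E) : Prop where
  maps : ∀ x ∈ U.events, f x ∈ V.events
  inj : ∀ x ∈ U.events, ∀ y ∈ U.events, f x = f y → x = y
  surj : ∀ y ∈ V.events, ∃ x ∈ U.events, f x = y
  lab_eq : ∀ x ∈ U.events, V.lab (f x) = U.lab x
  evord_iff : ∀ x ∈ U.events, ∀ y ∈ U.events, (U.evord x y ↔ V.evord (f x) (f y))

/-- `U ≅ V` for conclists. -/
def ClIso (U V : Conclist E A) : Prop := ∃ f, IsClIso U V f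

/-- `P` and `Q` are composable representatives: the target interface of `P` coincides
with the source interface of `Q` and is exactly the overlap of the event sets. -/
def Composable [DecidableEq E] (P Q : Ipomset E A) : Prop :=
  P.tgtIface = Q.srcIface ∧ P.events ∩ Q.events = P.tgt

/-- One step of the glued precedence order. -/
def glueStep (P Q : Ipomset E A) (x y : E) : Prop :=
  P.lt x y ∨ Q.lt x y ∨
    (x ∈ P.events ∧ x ∉ P.tgt ∧ y ∈ Q.events ∧ y ∉ Q.src)

/-- The glued precedence order: transitive closure. -/
def glueLt (P Q : Ipomset E A) : E → E → Prop :=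
  Relation.TransGen (glueStep P Q)

/-- The glued event order: the union of the two event orders. -/
def glueEvord (P Q : Ipomset E A) (x y : E) : Prop :=
  P.evord x y ∨ Q.evord x y

/-- `R` is the gluing of the composable representatives `P` and `Q`. -/
def IsGlueOf [DecidableEq E] (P Q R : Ipomset E A) : Prop :=
  Composable P Q ∧
  R.events = P.events ∪ Q.events ∧
  (∀ x y, R.lt x y ↔ glueLt P Q x y) ∧
  (∀ x y, R.evord x y ↔ glueEvord P Q x y) ∧
  R.src = P.src ∧ R.tgt = Q.tgt ∧
  (∀ x ∈ P.events, R.lab x = P.lab x) ∧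
  (∀ x ∈ Q.events, R.lab x = Q.lab x)

/-- `R ≅ P * Q`: up to isomorphism, `R` is the gluing of `P` and `Q`. -/
def IsGluing [DecidableEq E] (P Q R : Ipomset E A) : Prop :=
  ∃ P' Q' R', IpoIso P P' ∧ IpoIso Q Q' ∧ IpoIso R R' ∧ IsGlueOf P' Q' R'

/-- A letter of a step sequence: a starter or a terminator. -/
def StepLetter (P : Ipomset E A) : Prop := P.Starter ∨ P.Terminator

/-- A word of starters and terminators is coherent if consecutive interfaces match
(as isomorphism classes of conclists). -/
def Coherent [DecidableEq E] (w : List (Ipomset E A)) : Prop :=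
  (∀ P ∈ w, StepLetter P) ∧
  w.Chain' (fun P Q => ClIso P.tgtIface Q.srcIface)

/-- The congruence `~` on coherent words: generated by composing two subsequent
starters or two subsequent terminators, removing/inserting identities, and
replacing letters by isomorphic ones. -/
inductive StepEquiv {E : Type u} {A : Type v} [DecidableEq E] :
    List (Ipomset E A) → List (Ipomset E A) → Prop
  | glue (u v : List (Ipomset E A)) (P Q R : Ipomset E A) :
      Coherent (u ++ P :: Q :: v) →
      ((P.Starter ∧ Q.Starter) ∨ (P.Terminator ∧ Q.Terminator)) →
      IsGluing P Q R →
      StepEquiv (u ++ P :: Q :: v) (u ++ R :: v)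
  | ident (u v : List (Ipomset E A)) (P : Ipomset E A) :
      Coherent (u ++ P :: v) → P.IsIdentity → u ++ v ≠ [] →
      StepEquiv (u ++ P :: v) (u ++ v)
  | iso (u v : List (Ipomset E A)) (P Q : Ipomset E A) :
      Coherent (u ++ P :: v) → IpoIso P Q →
      StepEquiv (u ++ P :: v) (u ++ Q :: v)
  | refl (w : List (Ipomset E A)) : StepEquiv w w
  | symm {w₁ w₂ : List (Ipomset E A)} : StepEquiv w₁ w₂ → StepEquiv w₂ w₁
  | trans {w₁ w₂ w₃ : List (Ipomset E A)} :
      StepEquiv w₁ w₂ → StepEquiv w₂ w₃ → StepEquiv w₁ w₃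

/-- `R` is (up to isomorphism) the gluing `P₁ * ⋯ * Pₙ` of the word `w = P₁ ⋯ Pₙ`. -/
inductive GlueWord {E : Type u} {A : Type v} [DecidableEq E] :
    List (Ipomset E A) → Ipomset E A → Prop
  | single (P : Ipomset E A) : GlueWord [P] P
  | cons (P : Ipomset E A) (w : List (Ipomset E A)) (R S : Ipomset E A) :
      GlueWord w R → IsGluing P R S → GlueWord (P :: w) S

/-- The discrete ipomset on sub-conclist `V` of the discrete ipomset `W`,
with sources `S` and targets `T`. -/
def letterOf [DecidableEq E] (W : Ipomset E A) (hW : W.Discrete)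
    (V S T : Finset E) : Ipomset E A where
  events := V ∩ W.events
  lt _ _ := False
  evord x y := x ∈ V ∩ W.events ∧ y ∈ V ∩ W.events ∧ W.evord x y
  src := S ∩ (V ∩ W.events)
  tgt := T ∩ (V ∩ W.events)
  lab := W.lab
  lt_mem h := h.elim
  evord_mem h := ⟨h.1, h.2.1⟩
  lt_irrefl _ h := h
  lt_trans h := h.elim
  evord_irrefl x h := W.evord_irrefl x h.2.2
  evord_trans h1 h2 := ⟨h1.1, h2.2.1, W.evord_trans h1.2.2 h2.2.2⟩
  order_total {x y} hx hy hxy := by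
    rcases W.order_total (Finset.mem_inter.mp hx).2 (Finset.mem_inter.mp hy).2 hxy
      with h | h | h | h
    · exact absurd h (hW _ _)
    · exact absurd h (hW _ _)
    · exact Or.inr (Or.inr (Or.inl ⟨hx, hy, h⟩))
    · exact Or.inr (Or.inr (Or.inr ⟨hy, hx, h⟩))
  src_sub := Finset.inter_subset_right
  tgt_sub := Finset.inter_subset_right
  src_min _ h := h
  tgt_max _ h := h

/-- `V↑B`: the starter on the conclist `V` (inside `W`) starting the events of `B`. -/
def upOn [DecidableEq E] (W : Ipomset E A) (hW : W.Discrete) (V B : Finset E) :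
    Ipomset E A :=
  letterOf W hW V (V \ B) V

/-- `V↓B`: the terminator on the conclist `V` (inside `W`) terminating the events of `B`. -/
def downOn [DecidableEq E] (W : Ipomset E A) (hW : W.Discrete) (V B : Finset E) :
    Ipomset E A :=
  letterOf W hW V V (V \ B)

/-- The transposition relation: `TranspAt w w'` holds iff `w' = τᵢ(w)` for some `i`. -/
inductive TranspAt {E : Type u} {A : Type v} [DecidableEq E] :
    List (Ipomset E A) → List (Ipomset E A) → Prop
  | ss (u v : List (Ipomset E A)) (W : Ipomset E A) (hW : W.Discrete)
      (Aa Bb : Finset E) (hA : Aa ⊆ W.events) (hB : Bb ⊆ W.events)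
      (hd : Disjoint Aa Bb) :
      TranspAt (u ++ upOn W hW (W.events \ Bb) Aa :: upOn W hW W.events Bb :: v)
               (u ++ upOn W hW (W.events \ Aa) Bb :: upOn W hW W.events Aa :: v)
  | tt (u v : List (Ipomset E A)) (W : Ipomset E A) (hW : W.Discrete)
      (Aa Bb : Finset E) (hA : Aa ⊆ W.events) (hB : Bb ⊆ W.events)
      (hd : Disjoint Aa Bb) :
      TranspAt (u ++ downOn W hW W.events Aa :: downOn W hW (W.events \ Aa) Bb :: v)
               (u ++ downOn W hW W.events Bb :: downOn W hW (W.events \ Bb) Aa :: v)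
  | st (u v : List (Ipomset E A)) (W : Ipomset E A) (hW : W.Discrete)
      (Aa Bb : Finset E) (hA : Aa ⊆ W.events) (hB : Bb ⊆ W.events)
      (hd : Disjoint Aa Bb) :
      TranspAt (u ++ upOn W hW W.events Aa :: downOn W hW W.events Bb :: v)
               (u ++ downOn W hW (W.events \ Aa) Bb :: upOn W hW (W.events \ Bb) Aa :: v)
  | ts (u v : List (Ipomset E A)) (W : Ipomset E A) (hW : W.Discrete)
      (Aa Bb : Finset E) (hA : Aa ⊆ W.events) (hB : Bb ⊆ W.events)
      (hd : Disjoint Aa Bb) :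
      TranspAt (u ++ downOn W hW (W.events \ Bb) Aa :: upOn W hW (W.events \ Aa) Bb :: v)
               (u ++ upOn W hW W.events Bb :: downOn W hW W.events Aa :: v)

/-- A word is dense if every letter starts or terminates exactly one event. -/
def DenseWord [DecidableEq E] (w : List (Ipomset E A)) : Prop :=
  ∀ P ∈ w, (P.Starter ∧ (P.events \ P.src).card = 1) ∨
    (P.Terminator ∧ (P.events \ P.tgt).card = 1)

/-- There is a chain of transpositions from `w₁` to `w₂` through dense coherent words
all satisfying `pred`. -/
def TranspChain [DecidableEq E] (pred : List (Ipomset E A) → Prop)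
    (w₁ w₂ : List (Ipomset E A)) : Prop :=
  ∃ us : List (List (Ipomset E A)),
    us.head? = some w₁ ∧ us.getLast? = some w₂ ∧
    us.Chain' TranspAt ∧ ∀ u ∈ us, DenseWord u ∧ Coherent u ∧ pred u

/-- A word is sparse if it is a single identity, or its letters are non-identity
starters and terminators which strictly alternate. -/
def SparseWord [DecidableEq E] (w : List (Ipomset E A)) : Prop :=
  (∃ P, w = [P] ∧ P.IsIdentity) ∨
  ((∀ P ∈ w, StepLetter P ∧ ¬ P.IsIdentity) ∧
    w.Chain' (fun P Q => (P.Starter ∧ Q.Terminator) ∨ (P.Terminator ∧ Q.Starter)))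

/-- `w` is THE sparse step decomposition of `P` (up to the chosen representatives). -/
def SparseDecomp [DecidableEq E] (P : Ipomset E A) (w : List (Ipomset E A)) : Prop :=
  SparseWord w ∧ Coherent w ∧ ∃ R, GlueWord w R ∧ IpoIso R P

/-- The transposition exchanging a starter followed by a terminator
(third case of the definition of transpositions): `TranspST w tw` iff `tw = τᵢ(w)`
where the `i`-th factor of `w` is `U↑A · U↓B`. -/
def TranspST [DecidableEq E] (w tw : List (Ipomset E A)) : Prop :=
  ∃ (u v : List (Ipomset E A)) (W : Ipomset E A) (hW : W.Discrete)
    (Aa Bb : Finset E), Aa ⊆ W.events ∧ Bb ⊆ W.events ∧ Disjoint Aa Bb ∧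
    w = u ++ upOn W hW W.events Aa :: downOn W hW W.events Bb :: v ∧
    tw = u ++ downOn W hW (W.events \ Aa) Bb :: upOn W hW (W.events \ Bb) Aa :: v

/-- `w₂ <ₑ w₁` on step sequences: some representative of `w₂` is obtained from a
representative of `w₁` by a starter-terminator transposition. -/
def LtE [DecidableEq E] (w₂ w₁ : List (Ipomset E A)) : Prop :=
  ∃ w₁' w₂', StepEquiv w₁ w₁' ∧ StepEquiv w₂ w₂' ∧ TranspST w₁' w₂'

/-- `≤`: the reflexive-transitive closure of `<ₑ` on step sequences. -/
def StepLe [DecidableEq E] (w₁ w₂ : List (Ipomset E A)) : Prop :=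
  Relation.ReflTransGen (fun x y => LtE x y ∨ StepEquiv x y) w₁ w₂

/-- A higher-dimensional automaton: cells labelled by conclists (identity ipomsets),
face maps satisfying the precubical identities, start and accept cells. -/
structure HDA (X : Type w) (E : Type u) (A : Type v) [DecidableEq E] where
  ev : X → Ipomset E A
  ev_id : ∀ q, (ev q).IsIdentity
  face : Bool → Finset E → X → X
  face_ev : ∀ (b : Bool) (B : Finset E) (q : X), B ⊆ (ev q).events →
    ev (face b B q) =
      letterOf (ev q) (ev_id q).1 ((ev q).events \ B) ((ev q).events \ B)
        ((ev q).events \ B)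
  face_comm : ∀ (b c : Bool) (B C : Finset E) (q : X), Disjoint B C →
    B ⊆ (ev q).events → C ⊆ (ev q).events →
    face b B (face c C q) = face c C (face b B q)
  start : Set X
  accept : Set X

/-- Paths in an HDA, together with their event words (interleaving identities). -/
inductive HPath {X : Type w} {E : Type u} {A : Type v} [DecidableEq E]
    (H : HDA X E A) : X → X → List (Ipomset E A) → Prop
  | nil (q : X) : HPath H q q [H.ev q]
  | up (q p r : X) (w : List (Ipomset E A)) (B : Finset E)
      (hB : B ⊆ (H.ev p).events) :
      q = H.face false B p → HPath H p r w →
      HPath H q r (upOn (H.ev p) (H.ev_id p).1 (H.ev p).events B :: w)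
  | down (p q r : X) (w : List (Ipomset E A)) (B : Finset E)
      (hB : B ⊆ (H.ev p).events) :
      q = H.face true B p → HPath H q r w →
      HPath H p r (downOn (H.ev p) (H.ev_id p).1 (H.ev p).events B :: w)

/-- The language of an HDA: event ipomsets of accepting paths, closed under iso. -/
def HLang {X : Type w} [DecidableEq E] (H : HDA X E A) : Set (Ipomset E A) :=
  {P | ∃ q r w R, q ∈ H.start ∧ r ∈ H.accept ∧ HPath H q r w ∧
    GlueWord w R ∧ IpoIso R P}

/-- An ST-automaton: states labelled by conclists (identity ipomsets), edges labelled
by starters and terminators consistently with the state labels. -/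
structure STAut (Q : Type w) (E : Type u) (A : Type v) [DecidableEq E] where
  lab : Q → Ipomset E A
  lab_id : ∀ q, (lab q).IsIdentity
  edge : Q → Ipomset E A → Q → Prop
  edge_st : ∀ {q P r}, edge q P r → StepLetter P
  edge_src : ∀ {q P r}, edge q P r → P.srcIface = (lab q).srcIface
  edge_tgt : ∀ {q P r}, edge q P r → P.tgtIface = (lab r).srcIface
  start : Set Q
  accept : Set Q

/-- Paths in an ST-automaton together with their labels
`id_{λ(q₀)} P₁ id_{λ(q₁)} ⋯ Pₙ id_{λ(qₙ)}`. -/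
inductive STPath {Q : Type w} {E : Type u} {A : Type v} [DecidableEq E]
    (S : STAut Q E A) : Q → Q → List (Ipomset E A) → Prop
  | nil (q : Q) : STPath S q q [S.lab q]
  | cons (q p r : Q) (P : Ipomset E A) (w : List (Ipomset E A)) :
      S.edge q P p → STPath S p r w → STPath S q r (S.lab q :: P :: w)

/-- The language of an ST-automaton: the `~`-classes of labels of accepting paths
(as a `~`-saturated set of words). -/
def STLang {Q : Type w} [DecidableEq E] (S : STAut Q E A) :
    Set (List (Ipomset E A)) :=
  {w | ∃ q r w', q ∈ S.start ∧ r ∈ S.accept ∧ STPath S q r w' ∧ StepEquiv w w'}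

/-- `S` is the ST-automaton `ST(X)` associated to the HDA `H`. -/
def IsSTof {X : Type w} [DecidableEq E] (H : HDA X E A) (S : STAut X E A) : Prop :=
  S.lab = H.ev ∧ S.start = H.start ∧ S.accept = H.accept ∧
  ∀ q P r, S.edge q P r ↔
    ((∃ B, ∃ _ : B ⊆ (H.ev r).events, q = H.face false B r ∧
        P = upOn (H.ev r) (H.ev_id r).1 (H.ev r).events B) ∨
     (∃ B, ∃ _ : B ⊆ (H.ev q).events, r = H.face true B q ∧
        P = downOn (H.ev q) (H.ev_id q).1 (H.ev q).events B))

/-- The image of a set of ipomsets under `Φ` (sparse step decomposition),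
as a `~`-saturated set of words. -/
def PhiImage [DecidableEq E] (L : Set (Ipomset E A)) : Set (List (Ipomset E A)) :=
  {w | ∃ P ∈ L, ∃ w', SparseDecomp P w' ∧ StepEquiv w w'}

/-- The image of a set of words under `Ψ` (gluing), as an iso-saturated set of ipomsets. -/
def PsiImage [DecidableEq E] (L : Set (List (Ipomset E A))) : Set (Ipomset E A) :=
  {P | ∃ w ∈ L, ∃ R, GlueWord w R ∧ IpoIso R P}

/-- `H` together with `ι` realizes the HDA `HD(S)` obtained from the ST-automaton `S`:
cells of `S` embed via `ι` compatibly with labels, start/accept cells, and each edge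
of `S` is realized by a face map of `H`. -/
def SimulatesST {Q : Type w} {X : Type w} [DecidableEq E]
    (S : STAut Q E A) (H : HDA X E A) (ι : Q → X) : Prop :=
  (∀ q, H.ev (ι q) = S.lab q) ∧
  (∀ q ∈ S.start, ι q ∈ H.start) ∧
  (∀ q ∈ S.accept, ι q ∈ H.accept) ∧
  ∀ q P r, S.edge q P r →
    ((∃ B, ∃ _ : B ⊆ (H.ev (ι r)).events, ι q = H.face false B (ι r) ∧
        P = upOn (H.ev (ι r)) (H.ev_id (ι r)).1 (H.ev (ι r)).events B) ∨
     (∃ B, ∃ _ : B ⊆ (H.ev (ι q)).events, ι r = H.face true B (ι q) ∧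
        P = downOn (H.ev (ι q)) (H.ev_id (ι q)).1 (H.ev (ι q)).events B))


/-!
Each generating move of `~` preserves the gluing up to isomorphism, and since gluings of words
are formed from the right, `P₁ * (P₂ * (⋯ * Pₙ))`, a move inside a word only has to be followed
through the letters to its left. Three facts about gluing do the work: it respects isomorphism of
the factors (two isomorphisms of the factors agree on the shared interface, because finite linear
orders are rigid); identities are units; and it is associative.

Associativity is proved for concrete representatives, which live in one common set of event
names, so one decomposition must first be moved along an isomorphism onto the events of the other
representative. Isomorphisms ignore the event order between comparable events, so this transport
only works for sharp ipomsets, whose event order relates incomparable events only. Every gluing of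
starters and terminators has a sharp isomorphic copy: its event order restricted to incomparable
pairs stays transitive.
-/

open Relation

theorem Set.InjOn.exists_leftInvOn {α : Type*} {f : α → α} {s : Set α} (h : Set.InjOn f s) :
    ∃ g : α → α, Set.LeftInvOn g f s := by
  rcases isEmpty_or_nonempty α with hα | hα
  · exact ⟨id, fun x => isEmptyElim x⟩
  · exact ⟨_, h.leftInvOn_invFunOn⟩

section Iso

variable {P Q R : Ipomset E A} {f g : E → E}

theorem IsIpoIso.id (P : Ipomset E A) : IsIpoIso P P id :=
  ⟨fun _ hx => hx, fun _ _ _ _ h => h, fun y hy => ⟨y, hy, rfl⟩, fun _ _ => Iff.rfl,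
    fun _ _ => Iff.rfl, fun _ _ => rfl, fun _ _ _ _ => Iff.rfl, fun _ _ _ _ _ _ => Iff.rfl⟩

theorem IsIpoIso.comp (hf : IsIpoIso P Q f) (hg : IsIpoIso Q R g) : IsIpoIso P R (g ∘ f) where
  maps x hx := hg.maps _ (hf.maps x hx)
  inj x hx y hy h := hf.inj x hx y hy (hg.inj _ (hf.maps x hx) _ (hf.maps y hy) h)
  surj z hz := by
    obtain ⟨y, hy, rfl⟩ := hg.surj z hz
    obtain ⟨x, hx, rfl⟩ := hf.surj y hy
    exact ⟨x, hx, rfl⟩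
  src_iff x hx := (hf.src_iff x hx).trans (hg.src_iff _ (hf.maps x hx))
  tgt_iff x hx := (hf.tgt_iff x hx).trans (hg.tgt_iff _ (hf.maps x hx))
  lab_eq x hx := (hg.lab_eq _ (hf.maps x hx)).trans (hf.lab_eq x hx)
  lt_iff x hx y hy := (hg.lt_iff _ (hf.maps x hx) _ (hf.maps y hy)).trans (hf.lt_iff x hx y hy)
  evord_iff x hx y hy h₁ h₂ :=
    (hf.evord_iff x hx y hy h₁ h₂).trans (hg.evord_iff _ (hf.maps x hx) _ (hf.maps y hy)
      (mt (hf.lt_iff x hx y hy).mp h₁) (mt (hf.lt_iff y hy x hx).mp h₂))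

theorem IsIpoIso.congr (hf : IsIpoIso P Q f) (h : ∀ x ∈ P.events, f x = g x) :
    IsIpoIso P Q g where
  maps x hx := h x hx ▸ hf.maps x hx
  inj x hx y hy hxy := hf.inj x hx y hy (by rw [h x hx, h y hy, hxy])
  surj y hy := by
    obtain ⟨x, hx, rfl⟩ := hf.surj y hy
    exact ⟨x, hx, (h x hx).symm⟩
  src_iff x hx := h x hx ▸ hf.src_iff x hx
  tgt_iff x hx := h x hx ▸ hf.tgt_iff x hx
  lab_eq x hx := h x hx ▸ hf.lab_eq x hx
  lt_iff x hx y hy := h x hx ▸ h y hy ▸ hf.lt_iff x hx y hy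
  evord_iff x hx y hy := h x hx ▸ h y hy ▸ hf.evord_iff x hx y hy

theorem IsIpoIso.symm_of_leftInvOn (hf : IsIpoIso P Q f) (hg : Set.LeftInvOn g f P.events) :
    IsIpoIso Q P g := by
  have back : ∀ y ∈ Q.events, ∃ x ∈ P.events, y = f x := fun y hy =>
    let ⟨x, hx, hxy⟩ := hf.surj y hy
    ⟨x, hx, hxy.symm⟩
  refine ⟨fun y hy => ?_, fun y hy y' hy' h => ?_, fun x hx => ⟨f x, hf.maps x hx, hg hx⟩,
    fun y hy => ?_, fun y hy => ?_, fun y hy => ?_, fun y hy y' hy' => ?_,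
    fun y hy y' hy' h₁ h₂ => ?_⟩
  all_goals obtain ⟨x, hx, rfl⟩ := back y hy
  all_goals try obtain ⟨x', hx', rfl⟩ := back y' hy'
  · rw [hg hx]
    exact hx
  · rw [hg hx, hg hx'] at h
    rw [h]
  · rw [hg hx]
    exact (hf.src_iff x hx).symm
  · rw [hg hx]
    exact (hf.tgt_iff x hx).symm
  · rw [hg hx]
    exact (hf.lab_eq x hx).symm
  · rw [hg hx, hg hx']
    exact (hf.lt_iff x hx x' hx').symm
  · rw [hg hx, hg hx']
    exact (hf.evord_iff x hx x' hx' (mt (hf.lt_iff x hx x' hx').mpr h₁)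
      (mt (hf.lt_iff x' hx' x hx).mpr h₂)).symm

theorem IpoIso.refl (P : Ipomset E A) : IpoIso P P := ⟨id, IsIpoIso.id P⟩

theorem IpoIso.symm (h : IpoIso P Q) : IpoIso Q P := by
  obtain ⟨f, hf⟩ := h
  obtain ⟨g, hg⟩ := Set.InjOn.exists_leftInvOn (s := P.events) fun x hx y hy => hf.inj x hx y hy
  exact ⟨g, hf.symm_of_leftInvOn hg⟩

theorem IpoIso.trans (h₁ : IpoIso P Q) (h₂ : IpoIso Q R) : IpoIso P R :=
  let ⟨_, hf⟩ := h₁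
  let ⟨_, hg⟩ := h₂
  ⟨_, hf.comp hg⟩

end Iso

section Conclist

variable {U V W : Conclist E A} {f g : E → E}

theorem IsClIso.comp (hf : IsClIso U V f) (hg : IsClIso V W g) : IsClIso U W (g ∘ f) where
  maps x hx := hg.maps _ (hf.maps x hx)
  inj x hx y hy h := hf.inj x hx y hy (hg.inj _ (hf.maps x hx) _ (hf.maps y hy) h)
  surj z hz := by
    obtain ⟨y, hy, rfl⟩ := hg.surj z hz
    obtain ⟨x, hx, rfl⟩ := hf.surj y hy
    exact ⟨x, hx, rfl⟩
  lab_eq x hx := (hg.lab_eq _ (hf.maps x hx)).trans (hf.lab_eq x hx)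
  evord_iff x hx y hy :=
    (hf.evord_iff x hx y hy).trans (hg.evord_iff _ (hf.maps x hx) _ (hf.maps y hy))

theorem ClIso.refl (U : Conclist E A) : ClIso U U :=
  ⟨id, fun _ hx => hx, fun _ _ _ _ h => h, fun y hy => ⟨y, hy, rfl⟩, fun _ _ => rfl,
    fun _ _ _ _ => Iff.rfl⟩

theorem ClIso.trans (h₁ : ClIso U V) (h₂ : ClIso V W) : ClIso U W :=
  let ⟨_, hf⟩ := h₁
  let ⟨_, hg⟩ := h₂
  ⟨_, hf.comp hg⟩

open Classical in
theorem IsClIso.card_lower (hf : IsClIso U V f) {x : E} (hx : x ∈ U.events) :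
    (V.events.filter (V.evord · (f x))).card = (U.events.filter (U.evord · x)).card := by
  symm
  apply Finset.card_bij (fun a _ => f a)
  · intro a ha
    simp only [Finset.mem_filter] at ha ⊢
    exact ⟨hf.maps a ha.1, (hf.evord_iff a ha.1 x hx).mp ha.2⟩
  · intro a ha b hb hab
    exact hf.inj a (Finset.mem_filter.mp ha).1 b (Finset.mem_filter.mp hb).1 hab
  · intro b hb
    simp only [Finset.mem_filter] at hb
    obtain ⟨a, ha, rfl⟩ := hf.surj b hb.1
    exact ⟨a, Finset.mem_filter.mpr ⟨ha, (hf.evord_iff a ha x hx).mpr hb.2⟩, rfl⟩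

open Classical in
theorem Conclist.card_lower_lt (V : Conclist E A) {u v : E} (hu : u ∈ V.events)
    (huv : V.evord u v) :
    (V.events.filter (V.evord · u)).card < (V.events.filter (V.evord · v)).card := by
  refine Finset.card_lt_card ((Finset.ssubset_iff_of_subset fun z hz => ?_).mpr
    ⟨u, Finset.mem_filter.mpr ⟨hu, huv⟩, fun h => V.evord_irrefl u (Finset.mem_filter.mp h).2⟩)
  simp only [Finset.mem_filter] at hz ⊢
  exact ⟨hz.1, V.evord_trans hz.2 huv⟩

/-- Rigidity of finite linear orders: an isomorphism preserves the number of events below each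
event. -/
theorem IsClIso.eqOn (hf : IsClIso U V f) (hg : IsClIso U V g) :
    ∀ x ∈ U.events, f x = g x := by
  classical
  intro x hx
  by_contra hne
  have hrank := (hf.card_lower hx).trans (hg.card_lower hx).symm
  rcases V.evord_total (hf.maps x hx) (hg.maps x hx) hne with h | h
  · exact (V.card_lower_lt (hf.maps x hx) h).ne hrank
  · exact (V.card_lower_lt (hg.maps x hx) h).ne hrank.symm

end Conclist

theorem Conclist.ext_of {U V : Conclist E A} (he : U.events = V.events)
    (ho : ∀ x y, U.evord x y ↔ V.evord x y) (hl : ∀ x, U.lab x = V.lab x) : U = V := by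
  obtain ⟨_, evord, lab, _⟩ := U
  obtain ⟨_, evord', lab', _⟩ := V
  obtain rfl : evord = evord' := funext₂ fun x y => propext (ho x y)
  obtain rfl : lab = lab' := funext hl
  cases he
  rfl

section Interface

variable [DecidableEq E] {P Q : Ipomset E A} {x y : E}

theorem Ipomset.tgtIface_eq_srcIface (h : P.tgt = Q.src)
    (he : ∀ x ∈ P.tgt, ∀ y ∈ P.tgt, P.evord x y ↔ Q.evord x y)
    (hl : ∀ x ∈ P.tgt, P.lab x = Q.lab x) : P.tgtIface = Q.srcIface := by
  refine Conclist.ext_of h (fun x y => ?_) (fun x => ?_) <;>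
    simp only [Ipomset.tgtIface, Ipomset.srcIface, ← h]
  · exact and_congr_right fun hx => and_congr_right fun hy => he x hx y hy
  · by_cases hx : x ∈ P.tgt <;> simp [hx, hl]

theorem Composable.tgt_eq_src (hc : Composable P Q) : P.tgt = Q.src :=
  congrArg Conclist.events hc.1

theorem Composable.mem_tgt (hc : Composable P Q) (hP : x ∈ P.events) (hQ : x ∈ Q.events) :
    x ∈ P.tgt :=
  hc.2 ▸ Finset.mem_inter.mpr ⟨hP, hQ⟩

theorem Composable.mem_src (hc : Composable P Q) (hP : x ∈ P.events) (hQ : x ∈ Q.events) :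
    x ∈ Q.src :=
  hc.tgt_eq_src ▸ hc.mem_tgt hP hQ

theorem Composable.evord_iff (hc : Composable P Q) (hx : x ∈ P.tgt) (hy : y ∈ P.tgt) :
    P.evord x y ↔ Q.evord x y := by
  have h := congrFun (congrFun (congrArg Conclist.evord hc.1) x) y
  simp only [Ipomset.tgtIface, Ipomset.srcIface, ← hc.tgt_eq_src] at h
  simpa [hx, hy] using h

theorem Composable.lab_eq (hc : Composable P Q) (hx : x ∈ P.tgt) : P.lab x = Q.lab x := by
  have h := congrFun (congrArg Conclist.lab hc.1) x
  simp only [Ipomset.tgtIface, Ipomset.srcIface, ← hc.tgt_eq_src] at h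
  simpa [hx] using h

end Interface

section GlueOrder

variable {P Q : Ipomset E A} {x y : E}

theorem glueStep_mem (h : glueStep P Q x y) :
    (x ∈ P.events ∨ x ∈ Q.events) ∧ (y ∈ P.events ∨ y ∈ Q.events) := by
  rcases h with h | h | ⟨hx, -, hy, -⟩
  · exact ⟨.inl (P.lt_mem h).1, .inl (P.lt_mem h).2⟩
  · exact ⟨.inr (Q.lt_mem h).1, .inr (Q.lt_mem h).2⟩
  · exact ⟨.inl hx, .inr hy⟩

theorem glueLt_mem (h : glueLt P Q x y) :
    (x ∈ P.events ∨ x ∈ Q.events) ∧ (y ∈ P.events ∨ y ∈ Q.events) := by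
  induction h with
  | single h => exact glueStep_mem h
  | tail _ h ih => exact ⟨ih.1, (glueStep_mem h).2⟩

variable [DecidableEq E]

theorem Composable.lt_of_glueStep_of_mem_left (hc : Composable P Q) (h : glueStep P Q x y)
    (hy : y ∈ P.events) : P.lt x y := by
  rcases h with h | h | ⟨-, -, hyQ, hyQs⟩
  · exact h
  · exact absurd h (Q.src_min (hc.mem_src hy (Q.lt_mem h).2))
  · exact absurd (hc.mem_src hy hyQ) hyQs

theorem Composable.lt_of_glueStep_of_mem_right (hc : Composable P Q) (h : glueStep P Q x y)
    (hx : x ∈ Q.events) : Q.lt x y := by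
  rcases h with h | h | ⟨hxP, hxPt, -, -⟩
  · exact absurd h (P.tgt_max (hc.mem_tgt (P.lt_mem h).1 hx))
  · exact h
  · exact absurd (hc.mem_tgt hxP hx) hxPt

theorem Composable.lt_of_glueLt_of_mem_left (hc : Composable P Q) (h : glueLt P Q x y)
    (hy : y ∈ P.events) : P.lt x y := by
  induction h with
  | single h => exact hc.lt_of_glueStep_of_mem_left h hy
  | tail _ h ih =>
    have hb := hc.lt_of_glueStep_of_mem_left h hy
    exact P.lt_trans (ih (P.lt_mem hb).1) hb

theorem Composable.lt_of_glueLt_of_mem_right (hc : Composable P Q) (h : glueLt P Q x y)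
    (hx : x ∈ Q.events) : Q.lt x y := by
  induction h using TransGen.head_induction_on with
  | single h => exact hc.lt_of_glueStep_of_mem_right h hx
  | head h _ ih =>
    have hb := hc.lt_of_glueStep_of_mem_right h hx
    exact Q.lt_trans hb (ih (Q.lt_mem hb).2)

theorem Composable.glueLt_irrefl (hc : Composable P Q) (x : E) : ¬ glueLt P Q x x := fun h =>
  (glueLt_mem h).1.elim (fun hx => P.lt_irrefl x (hc.lt_of_glueLt_of_mem_left h hx))
    (fun hx => Q.lt_irrefl x (hc.lt_of_glueLt_of_mem_right h hx))

theorem Composable.glueLt_total (hc : Composable P Q) (hx : x ∈ P.events ∨ x ∈ Q.events)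
    (hy : y ∈ P.events ∨ y ∈ Q.events) (hxy : x ≠ y) :
    glueLt P Q x y ∨ glueLt P Q y x ∨ glueEvord P Q x y ∨ glueEvord P Q y x := by
  have cross : ∀ {a b}, a ∈ P.events → a ∉ Q.events → b ∈ Q.events → b ∉ P.events →
      glueLt P Q a b := fun ha ha' hb hb' =>
    .single (.inr (.inr ⟨ha, fun h => ha' (Q.src_sub (hc.tgt_eq_src ▸ h)), hb,
      fun h => hb' (P.tgt_sub (hc.tgt_eq_src ▸ h))⟩))
  by_cases hP : x ∈ P.events ∧ y ∈ P.events
  · exact (P.order_total hP.1 hP.2 hxy).imp (fun h => .single (.inl h))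
      (Or.imp (fun h => .single (.inl h)) (Or.imp .inl .inl))
  by_cases hQ : x ∈ Q.events ∧ y ∈ Q.events
  · exact (Q.order_total hQ.1 hQ.2 hxy).imp (fun h => .single (.inr (.inl h)))
      (Or.imp (fun h => .single (.inr (.inl h))) (Or.imp .inr .inr))
  rcases hx with hx | hx <;> rcases hy with hy | hy
  · exact absurd ⟨hx, hy⟩ hP
  · exact .inl (cross hx (fun h => hQ ⟨h, hy⟩) hy fun h => hP ⟨hx, h⟩)
  · exact .inr (.inl (cross hy (fun h => hQ ⟨hx, h⟩) hx fun h => hP ⟨h, hy⟩))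
  · exact absurd ⟨hx, hy⟩ hQ

/-- The union of two event orders need not be transitive, hence `htr`. -/
def glueOf (P Q : Ipomset E A) (hc : Composable P Q)
    (htr : ∀ {x y z : E}, glueEvord P Q x y → glueEvord P Q y z → glueEvord P Q x z) :
    Ipomset E A where
  events := P.events ∪ Q.events
  lt := glueLt P Q
  evord := glueEvord P Q
  src := P.src
  tgt := Q.tgt
  lab x := if x ∈ P.events then P.lab x else Q.lab x
  lt_mem h := by simpa only [Finset.mem_union] using glueLt_mem h
  evord_mem := by
    rintro x y (h | h)
    · exact ⟨Finset.mem_union_left _ (P.evord_mem h).1, Finset.mem_union_left _ (P.evord_mem h).2⟩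
    · exact ⟨Finset.mem_union_right _ (Q.evord_mem h).1,
        Finset.mem_union_right _ (Q.evord_mem h).2⟩
  lt_irrefl := hc.glueLt_irrefl
  lt_trans := TransGen.trans
  evord_irrefl x h := h.elim (P.evord_irrefl x) (Q.evord_irrefl x)
  evord_trans := htr
  order_total hx hy hxy := hc.glueLt_total (Finset.mem_union.mp hx) (Finset.mem_union.mp hy) hxy
  src_sub := P.src_sub.trans Finset.subset_union_left
  tgt_sub := Q.tgt_sub.trans Finset.subset_union_right
  src_min hx h := P.src_min hx (hc.lt_of_glueLt_of_mem_left h (P.src_sub hx))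
  tgt_max hx h := Q.tgt_max hx (hc.lt_of_glueLt_of_mem_right h (Q.tgt_sub hx))

theorem isGlueOf_glueOf (hc : Composable P Q)
    (htr : ∀ {x y z : E}, glueEvord P Q x y → glueEvord P Q y z → glueEvord P Q x z) :
    IsGlueOf P Q (glueOf P Q hc htr) := by
  refine ⟨hc, rfl, fun _ _ => Iff.rfl, fun _ _ => Iff.rfl, rfl, rfl, fun x hx => if_pos hx,
    fun x hx => ?_⟩
  by_cases hxP : x ∈ P.events
  · exact (if_pos hxP).trans (hc.lab_eq (hc.mem_tgt hxP hx))
  · exact if_neg hxP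

variable {R : Ipomset E A}

theorem IsGlueOf.composable (hg : IsGlueOf P Q R) : Composable P Q := hg.1

theorem IsGlueOf.events_eq (hg : IsGlueOf P Q R) : R.events = P.events ∪ Q.events := hg.2.1

theorem IsGlueOf.mem_iff (hg : IsGlueOf P Q R) : x ∈ R.events ↔ x ∈ P.events ∨ x ∈ Q.events := by
  rw [hg.events_eq, Finset.mem_union]

theorem IsGlueOf.lt_iff (hg : IsGlueOf P Q R) : R.lt x y ↔ glueLt P Q x y := hg.2.2.1 x y

theorem IsGlueOf.evord_iff (hg : IsGlueOf P Q R) : R.evord x y ↔ glueEvord P Q x y :=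
  hg.2.2.2.1 x y

theorem IsGlueOf.src_eq (hg : IsGlueOf P Q R) : R.src = P.src := hg.2.2.2.2.1

theorem IsGlueOf.tgt_eq (hg : IsGlueOf P Q R) : R.tgt = Q.tgt := hg.2.2.2.2.2.1

theorem IsGlueOf.lab_left (hg : IsGlueOf P Q R) (hx : x ∈ P.events) : R.lab x = P.lab x :=
  hg.2.2.2.2.2.2.1 x hx

theorem IsGlueOf.lab_right (hg : IsGlueOf P Q R) (hx : x ∈ Q.events) : R.lab x = Q.lab x :=
  hg.2.2.2.2.2.2.2 x hx

theorem IsGlueOf.lt_of_lt_left (hg : IsGlueOf P Q R) (h : P.lt x y) : R.lt x y :=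
  hg.lt_iff.mpr (.single (.inl h))

theorem IsGlueOf.lt_of_lt_right (hg : IsGlueOf P Q R) (h : Q.lt x y) : R.lt x y :=
  hg.lt_iff.mpr (.single (.inr (.inl h)))

theorem IsGlueOf.evord_of_evord_left (hg : IsGlueOf P Q R) (h : P.evord x y) : R.evord x y :=
  hg.evord_iff.mpr (.inl h)

theorem IsGlueOf.evord_of_evord_right (hg : IsGlueOf P Q R) (h : Q.evord x y) :
    R.evord x y :=
  hg.evord_iff.mpr (.inr h)

end GlueOrder

section GlueIso

variable {P Q R P' Q' R' : Ipomset E A} {f g h : E → E} {x y : E}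

theorem glueStep_map (hP : IsIpoIso P P' h) (hQ : IsIpoIso Q Q' h) (hxy : glueStep P Q x y) :
    glueStep P' Q' (h x) (h y) := by
  rcases hxy with hxy | hxy | ⟨hx, hxt, hy, hys⟩
  · exact .inl ((hP.lt_iff _ (P.lt_mem hxy).1 _ (P.lt_mem hxy).2).mpr hxy)
  · exact .inr (.inl ((hQ.lt_iff _ (Q.lt_mem hxy).1 _ (Q.lt_mem hxy).2).mpr hxy))
  · exact .inr (.inr ⟨hP.maps x hx, mt (hP.tgt_iff x hx).mpr hxt, hQ.maps y hy,
      mt (hQ.src_iff y hy).mpr hys⟩)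

theorem glueLt_map (hP : IsIpoIso P P' h) (hQ : IsIpoIso Q Q' h) (hxy : glueLt P Q x y) :
    glueLt P' Q' (h x) (h y) :=
  hxy.lift h fun _ _ => glueStep_map hP hQ

theorem glueLt_map_iff (hP : IsIpoIso P P' h) (hQ : IsIpoIso Q Q' h)
    (hinj : Set.InjOn h {x | x ∈ P.events ∨ x ∈ Q.events}) (hx : x ∈ P.events ∨ x ∈ Q.events)
    (hy : y ∈ P.events ∨ y ∈ Q.events) : glueLt P' Q' (h x) (h y) ↔ glueLt P Q x y := by
  refine ⟨fun hxy => ?_, glueLt_map hP hQ⟩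
  obtain ⟨g, hg⟩ := hinj.exists_leftInvOn
  have hP' := hP.symm_of_leftInvOn (hg.mono fun _ => .inl)
  have hQ' := hQ.symm_of_leftInvOn (hg.mono fun _ => .inr)
  exact hg hx ▸ hg hy ▸ glueLt_map hP' hQ' hxy

theorem IsIpoIso.evord_iff_of_reflect {S : Set E} (hf : IsIpoIso P P' h)
    (hmem : ∀ {z}, z ∈ S → h z ∈ P'.events → z ∈ P.events) (hx : x ∈ S) (hy : y ∈ S)
    (hxy : ¬ P.lt x y) (hyx : ¬ P.lt y x) : P.evord x y ↔ P'.evord (h x) (h y) :=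
  ⟨fun e => (hf.evord_iff x (P.evord_mem e).1 y (P.evord_mem e).2 hxy hyx).mp e,
    fun e => (hf.evord_iff x (hmem hx (P'.evord_mem e).1) y (hmem hy (P'.evord_mem e).2) hxy
      hyx).mpr e⟩

variable [DecidableEq E]

theorem IsIpoIso.isClIso_srcIface (hf : IsIpoIso P Q f) :
    IsClIso P.srcIface Q.srcIface f where
  maps x hx := (hf.src_iff x (P.src_sub hx)).mp hx
  inj x hx y hy := hf.inj x (P.src_sub hx) y (P.src_sub hy)
  surj y hy := by
    obtain ⟨x, hx, rfl⟩ := hf.surj y (Q.src_sub hy)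
    exact ⟨x, (hf.src_iff x hx).mpr hy, rfl⟩
  lab_eq x hx := by
    have hx : x ∈ P.src := hx
    simp [Ipomset.srcIface, hx, (hf.src_iff x (P.src_sub hx)).mp hx, hf.lab_eq x (P.src_sub hx)]
  evord_iff x hx y hy := by
    have hx : x ∈ P.src := hx
    have hy : y ∈ P.src := hy
    simp only [Ipomset.srcIface]
    rw [← hf.src_iff x (P.src_sub hx), ← hf.src_iff y (P.src_sub hy),
      hf.evord_iff x (P.src_sub hx) y (P.src_sub hy) (P.src_min hy) (P.src_min hx)]

theorem IsIpoIso.isClIso_tgtIface (hf : IsIpoIso P Q f) :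
    IsClIso P.tgtIface Q.tgtIface f where
  maps x hx := (hf.tgt_iff x (P.tgt_sub hx)).mp hx
  inj x hx y hy := hf.inj x (P.tgt_sub hx) y (P.tgt_sub hy)
  surj y hy := by
    obtain ⟨x, hx, rfl⟩ := hf.surj y (Q.tgt_sub hy)
    exact ⟨x, (hf.tgt_iff x hx).mpr hy, rfl⟩
  lab_eq x hx := by
    have hx : x ∈ P.tgt := hx
    simp [Ipomset.tgtIface, hx, (hf.tgt_iff x (P.tgt_sub hx)).mp hx, hf.lab_eq x (P.tgt_sub hx)]
  evord_iff x hx y hy := by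
    have hx : x ∈ P.tgt := hx
    have hy : y ∈ P.tgt := hy
    simp only [Ipomset.tgtIface]
    rw [← hf.tgt_iff x (P.tgt_sub hx), ← hf.tgt_iff y (P.tgt_sub hy),
      hf.evord_iff x (P.tgt_sub hx) y (P.tgt_sub hy) (P.tgt_max hx) (P.tgt_max hy)]

theorem IpoIso.clIso_srcIface (hPQ : IpoIso P Q) : ClIso P.srcIface Q.srcIface :=
  let ⟨_, hf⟩ := hPQ
  ⟨_, hf.isClIso_srcIface⟩

theorem IpoIso.clIso_tgtIface (hPQ : IpoIso P Q) : ClIso P.tgtIface Q.tgtIface :=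
  let ⟨_, hf⟩ := hPQ
  ⟨_, hf.isClIso_tgtIface⟩

theorem Composable.mem_left_of_map (hc : Composable P Q) (hc' : Composable P' Q')
    (hQ : IsIpoIso Q Q' h) (hx : x ∈ P.events ∨ x ∈ Q.events)
    (hx' : h x ∈ P'.events) : x ∈ P.events :=
  hx.elim id fun hx => P.tgt_sub <| hc.tgt_eq_src ▸
    (hQ.src_iff x hx).mpr (hc'.mem_src hx' (hQ.maps x hx))

theorem Composable.mem_right_of_map (hc : Composable P Q) (hc' : Composable P' Q')
    (hP : IsIpoIso P P' h) (hx : x ∈ P.events ∨ x ∈ Q.events)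
    (hx' : h x ∈ Q'.events) : x ∈ Q.events :=
  hx.elim (fun hx => Q.src_sub <| hc.tgt_eq_src ▸
    (hP.tgt_iff x hx).mpr (hc'.mem_tgt (hP.maps x hx) hx')) id

theorem Composable.injOn_of_map (hc : Composable P Q) (hc' : Composable P' Q')
    (hP : IsIpoIso P P' h) (hQ : IsIpoIso Q Q' h) (hx : x ∈ P.events ∨ x ∈ Q.events)
    (hy : y ∈ P.events ∨ y ∈ Q.events) (hxy : h x = h y) : x = y := by
  rcases hx with hx | hx
  · exact hP.inj x hx y (hc.mem_left_of_map hc' hQ hy (hxy ▸ hP.maps x hx)) hxy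
  · exact hQ.inj x hx y (hc.mem_right_of_map hc' hP hy (hxy ▸ hQ.maps x hx)) hxy

theorem IsGlueOf.isIpoIso (hg : IsGlueOf P Q R) (hg' : IsGlueOf P' Q' R')
    (hP : IsIpoIso P P' h) (hQ : IsIpoIso Q Q' h) : IsIpoIso R R' h := by
  have hR : ∀ {x}, x ∈ R.events ↔ x ∈ P.events ∨ x ∈ Q.events := hg.mem_iff
  have hR' : ∀ {x}, x ∈ R'.events ↔ x ∈ P'.events ∨ x ∈ Q'.events := hg'.mem_iff
  have memP : ∀ {x}, _ → h x ∈ P'.events → x ∈ P.events :=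
    hg.composable.mem_left_of_map hg'.composable hQ
  have memQ : ∀ {x}, _ → h x ∈ Q'.events → x ∈ Q.events :=
    hg.composable.mem_right_of_map hg'.composable hP
  have hinj : ∀ {x y}, _ → _ → h x = h y → x = y :=
    hg.composable.injOn_of_map hg'.composable hP hQ
  refine ⟨fun x hx => ?_, fun x hx y hy => hinj (hR.mp hx) (hR.mp hy), fun y hy => ?_,
    fun x hx => ?_, fun x hx => ?_, fun x hx => ?_, fun x hx y hy => ?_,
    fun x hx y hy hxy hyx => ?_⟩
  · exact hR'.mpr ((hR.mp hx).imp (hP.maps x) (hQ.maps x))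
  · rcases hR'.mp hy with hy | hy
    · obtain ⟨x, hx, rfl⟩ := hP.surj y hy
      exact ⟨x, hR.mpr (.inl hx), rfl⟩
    · obtain ⟨x, hx, rfl⟩ := hQ.surj y hy
      exact ⟨x, hR.mpr (.inr hx), rfl⟩
  · rw [hg.src_eq, hg'.src_eq]
    by_cases hxP : x ∈ P.events
    · exact hP.src_iff x hxP
    · exact iff_of_false (fun h => hxP (P.src_sub h))
        fun h => hxP (memP (hR.mp hx) (P'.src_sub h))
  · rw [hg.tgt_eq, hg'.tgt_eq]
    by_cases hxQ : x ∈ Q.events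
    · exact hQ.tgt_iff x hxQ
    · exact iff_of_false (fun h => hxQ (Q.tgt_sub h))
        fun h => hxQ (memQ (hR.mp hx) (Q'.tgt_sub h))
  · rcases hR.mp hx with hx | hx
    · rw [hg'.lab_left (hP.maps x hx), hP.lab_eq x hx, hg.lab_left hx]
    · rw [hg'.lab_right (hQ.maps x hx), hQ.lab_eq x hx, hg.lab_right hx]
  · rw [hg.lt_iff, hg'.lt_iff]
    exact glueLt_map_iff hP hQ (fun x hx y hy => hinj hx hy) (hR.mp hx) (hR.mp hy)
  · rw [hg.evord_iff, hg'.evord_iff]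
    exact or_congr
      (hP.evord_iff_of_reflect memP (hR.mp hx) (hR.mp hy) (mt hg.lt_of_lt_left hxy)
        (mt hg.lt_of_lt_left hyx))
      (hQ.evord_iff_of_reflect memQ (hR.mp hx) (hR.mp hy) (mt hg.lt_of_lt_right hxy)
        (mt hg.lt_of_lt_right hyx))

/-- The two isomorphisms agree on the interface by rigidity, so they combine into one map. -/
theorem IsGlueOf.ipoIso (hg : IsGlueOf P Q R) (hg' : IsGlueOf P' Q' R') (hP : IpoIso P P')
    (hQ : IpoIso Q Q') : IpoIso R R' := by
  obtain ⟨f, hf⟩ := hP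
  obtain ⟨g, hgQ⟩ := hQ
  have hgt : IsClIso P.tgtIface P'.tgtIface g := hg'.composable.1 ▸ hg.composable.1 ▸ hgQ.isClIso_srcIface
  have hfg : ∀ x ∈ P.tgt, f x = g x := hf.isClIso_tgtIface.eqOn hgt
  refine ⟨fun x => if x ∈ P.events then f x else g x, hg.isIpoIso hg'
    (hf.congr fun x hx => (if_pos hx).symm) (hgQ.congr fun x hx => ?_)⟩
  by_cases hxP : x ∈ P.events
  · rw [if_pos hxP, hfg x (hg.composable.mem_tgt hxP hx)]
  · rw [if_neg hxP]

end GlueIso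

section Gluing

variable [DecidableEq E] {P Q R P' Q' R' : Ipomset E A} {x y : E}

theorem IsGlueOf.srcIface_eq (hg : IsGlueOf P Q R) : R.srcIface = P.srcIface := by
  obtain ⟨hc, -, -, hevord, hsrc, -, hlabP, -⟩ := hg
  refine Conclist.ext_of hsrc (fun x y => ?_) (fun x => ?_) <;>
    simp only [Ipomset.srcIface, hsrc]
  · refine and_congr_right fun hx => and_congr_right fun hy => (hevord x y).trans
      ⟨fun h => h.elim id fun h => ?_, .inl⟩
    exact (hc.evord_iff (hc.mem_tgt (P.src_sub hx) (Q.evord_mem h).1)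
      (hc.mem_tgt (P.src_sub hy) (Q.evord_mem h).2)).mpr h
  · by_cases hx : x ∈ P.src
    · simp [hx, hlabP x (P.src_sub hx)]
    · simp [hx]

theorem IsGlueOf.tgtIface_eq (hg : IsGlueOf P Q R) : R.tgtIface = Q.tgtIface := by
  obtain ⟨hc, -, -, hevord, -, htgt, -, hlabQ⟩ := hg
  refine Conclist.ext_of htgt (fun x y => ?_) (fun x => ?_) <;>
    simp only [Ipomset.tgtIface, htgt]
  · refine and_congr_right fun hx => and_congr_right fun hy => (hevord x y).trans
      ⟨fun h => h.elim (fun h => ?_) id, .inr⟩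
    exact (hc.evord_iff (hc.mem_tgt (P.evord_mem h).1 (Q.tgt_sub hx))
      (hc.mem_tgt (P.evord_mem h).2 (Q.tgt_sub hy))).mp h
  · by_cases hx : x ∈ Q.tgt
    · simp [hx, hlabQ x (Q.tgt_sub hx)]
    · simp [hx]

theorem IsGlueOf.isGluing (hg : IsGlueOf P Q R) : IsGluing P Q R :=
  ⟨P, Q, R, .refl P, .refl Q, .refl R, hg⟩

theorem IsGluing.congr (h : IsGluing P Q R) (hP : IpoIso P P') (hQ : IpoIso Q Q')
    (hR : IpoIso R R') : IsGluing P' Q' R' :=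
  let ⟨P₁, Q₁, R₁, iP, iQ, iR, hg⟩ := h
  ⟨P₁, Q₁, R₁, hP.symm.trans iP, hQ.symm.trans iQ, hR.symm.trans iR, hg⟩

theorem IsGluing.ipoIso (h : IsGluing P Q R) (h' : IsGluing P' Q' R') (hP : IpoIso P P')
    (hQ : IpoIso Q Q') : IpoIso R R' :=
  let ⟨_, _, _, iP, iQ, iR, hg⟩ := h
  let ⟨_, _, _, iP', iQ', iR', hg'⟩ := h'
  iR.trans ((hg.ipoIso hg' (iP.symm.trans (hP.trans iP')) (iQ.symm.trans (hQ.trans iQ'))).trans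
    iR'.symm)

theorem IsGluing.clIso_srcIface (h : IsGluing P Q R) : ClIso P.srcIface R.srcIface :=
  let ⟨_, _, _, iP, _, iR, hg⟩ := h
  iP.clIso_srcIface.trans (hg.srcIface_eq ▸ iR.symm.clIso_srcIface)

theorem IsGluing.clIso_tgtIface_srcIface (h : IsGluing P Q R) : ClIso P.tgtIface Q.srcIface :=
  let ⟨_, _, _, iP, iQ, _, hg⟩ := h
  iP.clIso_tgtIface.trans (hg.composable.1 ▸ iQ.symm.clIso_srcIface)

end Gluing

section GlueWord

variable [DecidableEq E] {P Q R R' : Ipomset E A} {u w w' w'' : List (Ipomset E A)}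

theorem GlueWord.ne_nil (h : GlueWord w R) : w ≠ [] := by
  cases h <;> simp

theorem glueWord_singleton_iff : GlueWord [P] R ↔ R = P := by
  refine ⟨fun h => ?_, fun h => h ▸ .single P⟩
  cases h with
  | single => rfl
  | cons _ _ _ _ h _ => cases h

theorem glueWord_cons_cons_iff :
    GlueWord (P :: Q :: w) R ↔ ∃ M, GlueWord (Q :: w) M ∧ IsGluing P M R := by
  refine ⟨fun h => ?_, fun ⟨M, hM, hg⟩ => .cons P _ M R hM hg⟩
  cases h with
  | cons _ _ M _ hM hg => exact ⟨M, hM, hg⟩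

theorem GlueWord.ipoIso (h : GlueWord w R) (h' : GlueWord w R') : IpoIso R R' := by
  induction h generalizing R' with
  | single P => exact glueWord_singleton_iff.mp h' ▸ .refl P
  | cons P w M S hM hg ih =>
    cases h' with
    | single => cases hM
    | cons _ _ M' _ hM' hg' => exact hg.ipoIso hg' (.refl P) (ih hM')

theorem GlueWord.clIso_srcIface (h : GlueWord (P :: w) R) : ClIso P.srcIface R.srcIface := by
  cases h with
  | single => exact .refl _
  | cons _ _ _ _ _ hg => exact hg.clIso_srcIface

def GlueTransfer (w w' : List (Ipomset E A)) : Prop :=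
  ∀ R, GlueWord w R → ∃ R', GlueWord w' R' ∧ IpoIso R R'

theorem GlueTransfer.refl (w : List (Ipomset E A)) : GlueTransfer w w :=
  fun R h => ⟨R, h, .refl R⟩

theorem GlueTransfer.trans (h : GlueTransfer w w') (h' : GlueTransfer w' w'') :
    GlueTransfer w w'' := fun R hR =>
  let ⟨_, hR', i⟩ := h R hR
  let ⟨R'', hR'', i'⟩ := h' _ hR'
  ⟨R'', hR'', i.trans i'⟩

theorem GlueTransfer.cons (P : Ipomset E A) (h : GlueTransfer w w') (hw : w ≠ []) :
    GlueTransfer (P :: w) (P :: w') := by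
  intro R hR
  obtain ⟨Q, w, rfl⟩ := List.exists_cons_of_ne_nil hw
  obtain ⟨M, hM, hg⟩ := glueWord_cons_cons_iff.mp hR
  obtain ⟨M', hM', i⟩ := h M hM
  obtain ⟨Q', w', rfl⟩ := List.exists_cons_of_ne_nil hM'.ne_nil
  exact ⟨R, glueWord_cons_cons_iff.mpr ⟨M', hM', hg.congr (.refl P) i (.refl R)⟩, .refl R⟩

theorem GlueTransfer.append_left (u : List (Ipomset E A)) (h : GlueTransfer w w')
    (hw : w ≠ []) : GlueTransfer (u ++ w) (u ++ w') := by
  induction u with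
  | nil => exact h
  | cons P u ih => exact ih.cons P (by simp [hw])

end GlueWord

section Sharpen

variable {P Q R : Ipomset E A} {x y z : E}

/-- Isomorphisms of ipomsets only see this part of the event order. -/
def Ipomset.concEvord (P : Ipomset E A) (x y : E) : Prop :=
  P.evord x y ∧ ¬ P.lt x y ∧ ¬ P.lt y x

def Ipomset.Sharp (P : Ipomset E A) : Prop :=
  ∀ ⦃x y⦄, P.evord x y → ¬ P.lt x y ∧ ¬ P.lt y x

def Ipomset.Sharpenable (P : Ipomset E A) : Prop :=
  ∀ ⦃x y z⦄, P.concEvord x y → P.concEvord y z → P.concEvord x z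

theorem Ipomset.Sharpenable.of_discrete (hP : P.Discrete) : P.Sharpenable :=
  fun _ _ _ h h' => ⟨P.evord_trans h.1 h'.1, hP _ _, hP _ _⟩

theorem IsIpoIso.concEvord_iff {f : E → E} (hf : IsIpoIso P Q f) (hx : x ∈ P.events)
    (hy : y ∈ P.events) : Q.concEvord (f x) (f y) ↔ P.concEvord x y := by
  simp only [Ipomset.concEvord, hf.lt_iff x hx y hy, hf.lt_iff y hy x hx]
  exact ⟨fun ⟨h, h₁, h₂⟩ => ⟨(hf.evord_iff x hx y hy h₁ h₂).mpr h, h₁, h₂⟩,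
    fun ⟨h, h₁, h₂⟩ => ⟨(hf.evord_iff x hx y hy h₁ h₂).mp h, h₁, h₂⟩⟩

theorem Ipomset.Sharpenable.of_ipoIso (hP : P.Sharpenable) (h : IpoIso P Q) :
    Q.Sharpenable := by
  obtain ⟨f, hf⟩ := h
  intro x y z hxy hyz
  obtain ⟨a, ha, rfl⟩ := hf.surj x (Q.evord_mem hxy.1).1
  obtain ⟨b, hb, rfl⟩ := hf.surj y (Q.evord_mem hxy.1).2
  obtain ⟨c, hc, rfl⟩ := hf.surj z (Q.evord_mem hyz.1).2
  exact (hf.concEvord_iff ha hc).mpr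
    (hP ((hf.concEvord_iff ha hb).mp hxy) ((hf.concEvord_iff hb hc).mp hyz))

def Ipomset.sharpen (P : Ipomset E A) (h : P.Sharpenable) : Ipomset E A where
  events := P.events
  lt := P.lt
  evord := P.concEvord
  src := P.src
  tgt := P.tgt
  lab := P.lab
  lt_mem := P.lt_mem
  evord_mem h := P.evord_mem h.1
  lt_irrefl := P.lt_irrefl
  lt_trans := P.lt_trans
  evord_irrefl x h := P.evord_irrefl x h.1
  evord_trans hxy hyz := h hxy hyz
  order_total {x y} hx hy hxy := by
    by_cases h₁ : P.lt x y
    · exact .inl h₁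
    by_cases h₂ : P.lt y x
    · exact .inr (.inl h₂)
    rcases P.order_total hx hy hxy with h | h | h | h
    · exact absurd h h₁
    · exact absurd h h₂
    · exact .inr (.inr (.inl ⟨h, h₁, h₂⟩))
    · exact .inr (.inr (.inr ⟨h, h₂, h₁⟩))
  src_sub := P.src_sub
  tgt_sub := P.tgt_sub
  src_min := P.src_min
  tgt_max := P.tgt_max

theorem Ipomset.sharp_sharpen (h : P.Sharpenable) : (P.sharpen h).Sharp :=
  fun _ _ hxy => hxy.2

theorem Ipomset.isIpoIso_sharpen (h : P.Sharpenable) : IsIpoIso P (P.sharpen h) id :=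
  ⟨fun _ hx => hx, fun _ _ _ _ h => h, fun y hy => ⟨y, hy, rfl⟩, fun _ _ => Iff.rfl,
    fun _ _ => Iff.rfl, fun _ _ => rfl, fun _ _ _ _ => Iff.rfl,
    fun _ _ _ _ h₁ h₂ => ⟨fun h => ⟨h, h₁, h₂⟩, And.left⟩⟩

theorem Ipomset.ipoIso_sharpen (h : P.Sharpenable) : IpoIso P (P.sharpen h) :=
  ⟨id, isIpoIso_sharpen h⟩

theorem StepLetter.discrete (h : StepLetter P) : P.Discrete :=
  h.elim And.left And.left

variable [DecidableEq E]

theorem Composable.concEvord_iff (hc : Composable P Q) (hx : x ∈ P.tgt) (hy : y ∈ P.tgt) :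
    P.concEvord x y ↔ Q.concEvord x y := by
  have hx' : x ∈ Q.src := hc.tgt_eq_src ▸ hx
  have hy' : y ∈ Q.src := hc.tgt_eq_src ▸ hy
  simp only [Ipomset.concEvord, hc.evord_iff hx hy, P.tgt_max hx, P.tgt_max hy, Q.src_min hx',
    Q.src_min hy', not_false_eq_true, and_true]

theorem IsGlueOf.concEvord_iff (hg : IsGlueOf P Q R) :
    R.concEvord x y ↔ P.concEvord x y ∨ Q.concEvord x y := by
  have hc := hg.composable
  constructor
  · rintro ⟨h, h₁, h₂⟩
    exact (hg.evord_iff.mp h).imp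
      (fun h => ⟨h, mt hg.lt_of_lt_left h₁, mt hg.lt_of_lt_left h₂⟩)
      (fun h => ⟨h, mt hg.lt_of_lt_right h₁, mt hg.lt_of_lt_right h₂⟩)
  · rintro (⟨h, h₁, h₂⟩ | ⟨h, h₁, h₂⟩)
    · exact ⟨hg.evord_of_evord_left h,
        fun h' => h₁ (hc.lt_of_glueLt_of_mem_left (hg.lt_iff.mp h') (P.evord_mem h).2),
        fun h' => h₂ (hc.lt_of_glueLt_of_mem_left (hg.lt_iff.mp h') (P.evord_mem h).1)⟩
    · exact ⟨hg.evord_of_evord_right h,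
        fun h' => h₁ (hc.lt_of_glueLt_of_mem_right (hg.lt_iff.mp h') (Q.evord_mem h).1),
        fun h' => h₂ (hc.lt_of_glueLt_of_mem_right (hg.lt_iff.mp h') (Q.evord_mem h).2)⟩

/-- In a chain `x ⋖ y ⋖ z` running from `P` into `Q`, transitivity of the glued event order
forces `x, z` into a common piece, where the interface lets us finish inside that piece. -/
theorem IsGlueOf.sharpenable (hg : IsGlueOf P Q R) (hP : P.Sharpenable) (hQ : Q.Sharpenable) :
    R.Sharpenable := by
  have hc := hg.composable
  have mixed : ∀ {x y z}, P.concEvord x y → Q.concEvord y z → R.concEvord x z := by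
    intro x y z hxy hyz
    have hy : y ∈ P.tgt := hc.mem_tgt (P.evord_mem hxy.1).2 (Q.evord_mem hyz.1).1
    have hxz := R.evord_trans (hg.evord_of_evord_left hxy.1) (hg.evord_of_evord_right hyz.1)
    refine hg.concEvord_iff.mpr ?_
    rcases hg.evord_iff.mp hxz with h | h
    · have hz := hc.mem_tgt (P.evord_mem h).2 (Q.evord_mem hyz.1).2
      exact .inl (hP hxy ((hc.concEvord_iff hy hz).mpr hyz))
    · have hx := hc.mem_tgt (P.evord_mem hxy.1).1 (Q.evord_mem h).1
      exact .inr (hQ ((hc.concEvord_iff hx hy).mp hxy) hyz)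
  have mixed' : ∀ {x y z}, Q.concEvord x y → P.concEvord y z → R.concEvord x z := by
    intro x y z hxy hyz
    have hy : y ∈ P.tgt := hc.mem_tgt (P.evord_mem hyz.1).1 (Q.evord_mem hxy.1).2
    have hxz := R.evord_trans (hg.evord_of_evord_right hxy.1) (hg.evord_of_evord_left hyz.1)
    refine hg.concEvord_iff.mpr ?_
    rcases hg.evord_iff.mp hxz with h | h
    · have hx := hc.mem_tgt (P.evord_mem h).1 (Q.evord_mem hxy.1).1
      exact .inl (hP ((hc.concEvord_iff hx hy).mpr hxy) hyz)
    · have hz := hc.mem_tgt (P.evord_mem hyz.1).2 (Q.evord_mem h).2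
      exact .inr (hQ hxy ((hc.concEvord_iff hy hz).mp hyz))
  intro x y z hxy hyz
  rcases hg.concEvord_iff.mp hxy with hxy | hxy <;> rcases hg.concEvord_iff.mp hyz with hyz | hyz
  · exact hg.concEvord_iff.mpr (.inl (hP hxy hyz))
  · exact mixed hxy hyz
  · exact mixed' hxy hyz
  · exact hg.concEvord_iff.mpr (.inr (hQ hxy hyz))

theorem IsGlueOf.sharpen (hg : IsGlueOf P Q R) (hP : P.Sharpenable) (hQ : Q.Sharpenable)
    (hR : R.Sharpenable) : IsGlueOf (P.sharpen hP) (Q.sharpen hQ) (R.sharpen hR) := by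
  have hc := hg.composable
  refine ⟨⟨?_, hc.2⟩, hg.events_eq, fun _ _ => hg.lt_iff, fun _ _ => hg.concEvord_iff, hg.src_eq,
    hg.tgt_eq, fun _ => hg.lab_left, fun _ => hg.lab_right⟩
  exact Ipomset.tgtIface_eq_srcIface hc.tgt_eq_src (fun x hx y hy => hc.concEvord_iff hx hy)
    fun x hx => hc.lab_eq hx

theorem GlueWord.sharpenable {w : List (Ipomset E A)} (h : GlueWord w R)
    (hw : ∀ P ∈ w, StepLetter P) : R.Sharpenable := by
  induction h with
  | single P => exact .of_discrete (hw P (by simp)).discrete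
  | cons P w M S _ hg ih =>
    have hP : P.Sharpenable := .of_discrete (hw P (by simp)).discrete
    have hM : M.Sharpenable := ih fun Q hQ => hw Q (by simp [hQ])
    obtain ⟨P₁, M₁, S₁, iP, iM, iS, hg₁⟩ := hg
    exact (hg₁.sharpenable (hP.of_ipoIso iP) (hM.of_ipoIso iM)).of_ipoIso iS.symm

end Sharpen

section Transport

variable {P Q R P' Q' R' : Ipomset E A} {k : E → E}

theorem IsIpoIso.rel_iff (hk : IsIpoIso R R' k) {r s : E → E → Prop}
    (hmem : ∀ x y, r x y ∨ s x y → x ∈ R'.events ∧ y ∈ R'.events)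
    (h : ∀ a ∈ R.events, ∀ b ∈ R.events, r (k a) (k b) ↔ s (k a) (k b)) (x y : E) :
    r x y ↔ s x y := by
  by_cases hxy : x ∈ R'.events ∧ y ∈ R'.events
  · obtain ⟨a, ha, rfl⟩ := hk.surj x hxy.1
    obtain ⟨b, hb, rfl⟩ := hk.surj y hxy.2
    exact h a ha b hb
  · exact iff_of_false (fun h => hxy (hmem x y (.inl h))) (fun h => hxy (hmem x y (.inr h)))

theorem IsIpoIso.evord_iff_of_sharp (hk : IsIpoIso R R' k) (hR : R.Sharp) (hR' : R'.Sharp)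
    {a b : E} (ha : a ∈ R.events) (hb : b ∈ R.events) : R'.evord (k a) (k b) ↔ R.evord a b :=
  ⟨fun h => (hk.evord_iff a ha b hb (mt (hk.lt_iff a ha b hb).mpr (hR' h).1)
      (mt (hk.lt_iff b hb a ha).mpr (hR' h).2)).mpr h,
    fun h => (hk.evord_iff a ha b hb (hR h).1 (hR h).2).mp h⟩

theorem Ipomset.map_rel_iff {S : Finset E} {r : E → E → Prop} (hk : Set.InjOn k S)
    (hPS : P.events ⊆ S) {a b : E} (ha : a ∈ S) (hb : b ∈ S) :
    (∃ a' ∈ P.events, ∃ b' ∈ P.events, k a' = k a ∧ k b' = k b ∧ r a' b') ↔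
      a ∈ P.events ∧ b ∈ P.events ∧ r a b := by
  refine ⟨fun ⟨a', ha', b', hb', e, e', h⟩ => ?_, fun ⟨ha, hb, h⟩ => ⟨a, ha, b, hb, rfl, rfl, h⟩⟩
  obtain rfl := hk (hPS ha') ha e
  obtain rfl := hk (hPS hb') hb e'
  exact ⟨ha', hb', h⟩

variable [DecidableEq E]

theorem IsIpoIso.image_eq {S : Finset E} {S' : Finset E} (hk : IsIpoIso P P' k)
    (hS : S ⊆ P.events) (hS' : S' ⊆ P'.events) (h : ∀ x ∈ P.events, x ∈ S ↔ k x ∈ S') :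
    S' = S.image k := by
  ext y
  simp only [Finset.mem_image]
  refine ⟨fun hy => ?_, fun ⟨x, hx, hxy⟩ => hxy ▸ (h x (hS hx)).mp hx⟩
  obtain ⟨x, hx, rfl⟩ := hk.surj y (hS' hy)
  exact ⟨x, (h x hx).mpr hy, rfl⟩

theorem IsIpoIso.events_image (hk : IsIpoIso P P' k) : P'.events = P.events.image k :=
  hk.image_eq subset_rfl subset_rfl fun x hx => iff_of_true hx (hk.maps x hx)

theorem IsIpoIso.src_image (hk : IsIpoIso P P' k) : P'.src = P.src.image k :=
  hk.image_eq P.src_sub P'.src_sub hk.src_iff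

theorem IsIpoIso.tgt_image (hk : IsIpoIso P P' k) : P'.tgt = P.tgt.image k :=
  hk.image_eq P.tgt_sub P'.tgt_sub hk.tgt_iff

theorem Composable.of_isIpoIso (hc : Composable P Q) (hP : IsIpoIso P P' k)
    (hQ : IsIpoIso Q Q' k) (hinj : ∀ a ∈ P.events, ∀ b ∈ Q.events, k a = k b → a = b) :
    Composable P' Q' := by
  have htgt : P'.tgt = Q'.src := by rw [hP.tgt_image, hQ.src_image, hc.tgt_eq_src]
  have hback : ∀ {x}, x ∈ P'.tgt → ∃ a ∈ P.tgt, k a = x := fun hx =>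
    Finset.mem_image.mp (hP.tgt_image ▸ hx)
  refine ⟨Ipomset.tgtIface_eq_srcIface htgt (fun x hx y hy => ?_) (fun x hx => ?_), ?_⟩
  · obtain ⟨a, ha, rfl⟩ := hback hx
    obtain ⟨b, hb, rfl⟩ := hback hy
    have ha' : a ∈ Q.src := hc.tgt_eq_src ▸ ha
    have hb' : b ∈ Q.src := hc.tgt_eq_src ▸ hb
    rw [← hP.evord_iff a (P.tgt_sub ha) b (P.tgt_sub hb) (P.tgt_max ha) (P.tgt_max hb),
      ← hQ.evord_iff a (Q.src_sub ha') b (Q.src_sub hb') (Q.src_min hb') (Q.src_min ha')]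
    exact hc.evord_iff ha hb
  · obtain ⟨a, ha, rfl⟩ := hback hx
    rw [hP.lab_eq a (P.tgt_sub ha), hQ.lab_eq a (Q.src_sub (hc.tgt_eq_src ▸ ha)), hc.lab_eq ha]
  · refine Finset.Subset.antisymm (fun x hx => ?_) fun x hx =>
      Finset.mem_inter.mpr ⟨P'.tgt_sub hx, Q'.src_sub (htgt ▸ hx)⟩
    obtain ⟨hxP, hxQ⟩ := Finset.mem_inter.mp hx
    obtain ⟨a, ha, rfl⟩ := hP.surj x hxP
    obtain ⟨b, hb, hab⟩ := hQ.surj _ hxQ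
    obtain rfl := hinj a ha b hb hab.symm
    exact (hP.tgt_iff a ha).mp (hc.mem_tgt ha hb)

def Ipomset.map (P : Ipomset E A) (k : E → E) (lab : E → A) (hk : Set.InjOn k P.events) :
    Ipomset E A where
  events := P.events.image k
  lt x y := ∃ a ∈ P.events, ∃ b ∈ P.events, k a = x ∧ k b = y ∧ P.lt a b
  evord x y := ∃ a ∈ P.events, ∃ b ∈ P.events, k a = x ∧ k b = y ∧ P.evord a b
  src := P.src.image k
  tgt := P.tgt.image k
  lab := lab
  lt_mem := by
    rintro x y ⟨a, ha, b, hb, rfl, rfl, -⟩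
    exact ⟨Finset.mem_image_of_mem k ha, Finset.mem_image_of_mem k hb⟩
  evord_mem := by
    rintro x y ⟨a, ha, b, hb, rfl, rfl, -⟩
    exact ⟨Finset.mem_image_of_mem k ha, Finset.mem_image_of_mem k hb⟩
  lt_irrefl := by
    rintro x ⟨a, ha, b, hb, rfl, he, h⟩
    exact P.lt_irrefl a (hk ha hb he.symm ▸ h)
  lt_trans := by
    rintro x y z ⟨a, ha, b, hb, rfl, rfl, h⟩ ⟨b', hb', c, hc, he, rfl, h'⟩
    exact ⟨a, ha, c, hc, rfl, rfl, P.lt_trans h (hk hb' hb he ▸ h')⟩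
  evord_irrefl := by
    rintro x ⟨a, ha, b, hb, rfl, he, h⟩
    exact P.evord_irrefl a (hk ha hb he.symm ▸ h)
  evord_trans := by
    rintro x y z ⟨a, ha, b, hb, rfl, rfl, h⟩ ⟨b', hb', c, hc, he, rfl, h'⟩
    exact ⟨a, ha, c, hc, rfl, rfl, P.evord_trans h (hk hb' hb he ▸ h')⟩
  order_total := by
    intro x y hx hy hne
    obtain ⟨a, ha, rfl⟩ := Finset.mem_image.mp hx
    obtain ⟨b, hb, rfl⟩ := Finset.mem_image.mp hy
    rcases P.order_total ha hb (fun h => hne (h ▸ rfl)) with h | h | h | h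
    · exact .inl ⟨a, ha, b, hb, rfl, rfl, h⟩
    · exact .inr (.inl ⟨b, hb, a, ha, rfl, rfl, h⟩)
    · exact .inr (.inr (.inl ⟨a, ha, b, hb, rfl, rfl, h⟩))
    · exact .inr (.inr (.inr ⟨b, hb, a, ha, rfl, rfl, h⟩))
  src_sub := Finset.image_subset_image P.src_sub
  tgt_sub := Finset.image_subset_image P.tgt_sub
  src_min := by
    rintro x y hx ⟨c, hc, b, hb, rfl, he, h⟩
    obtain ⟨a, ha, rfl⟩ := Finset.mem_image.mp hx
    exact P.src_min ha (hk hb (P.src_sub ha) he ▸ h)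
  tgt_max := by
    rintro x y hx ⟨b, hb, c, hc, he, rfl, h⟩
    obtain ⟨a, ha, rfl⟩ := Finset.mem_image.mp hx
    exact P.tgt_max ha (hk hb (P.tgt_sub ha) he ▸ h)

theorem Ipomset.isIpoIso_map {lab : E → A} (hk : Set.InjOn k P.events)
    (hlab : ∀ a ∈ P.events, lab (k a) = P.lab a) : IsIpoIso P (P.map k lab hk) k where
  maps x hx := Finset.mem_image_of_mem k hx
  inj x hx y hy := fun h => hk hx hy h
  surj y hy := Finset.mem_image.mp hy
  src_iff x hx := by
    simp only [Ipomset.map, Finset.mem_image]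
    exact ⟨fun h => ⟨x, h, rfl⟩, fun ⟨a, ha, e⟩ => hk (P.src_sub ha) hx e ▸ ha⟩
  tgt_iff x hx := by
    simp only [Ipomset.map, Finset.mem_image]
    exact ⟨fun h => ⟨x, h, rfl⟩, fun ⟨a, ha, e⟩ => hk (P.tgt_sub ha) hx e ▸ ha⟩
  lab_eq := hlab
  lt_iff x hx y hy := by
    show (∃ a ∈ P.events, ∃ b ∈ P.events, k a = k x ∧ k b = k y ∧ P.lt a b) ↔ _
    rw [map_rel_iff hk subset_rfl hx hy]
    simp [hx, hy]
  evord_iff x hx y hy _ _ := by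
    show _ ↔ ∃ a ∈ P.events, ∃ b ∈ P.events, k a = k x ∧ k b = k y ∧ P.evord a b
    rw [map_rel_iff hk subset_rfl hx hy]
    simp [hx, hy]

theorem IsGlueOf.transport (hg : IsGlueOf P Q R) (hR : R.Sharp) (hR' : R'.Sharp)
    (hk : IsIpoIso R R' k) :
    ∃ P' Q', IsIpoIso P P' k ∧ IsIpoIso Q Q' k ∧ IsGlueOf P' Q' R' := by
  have hPR : P.events ⊆ R.events := hg.events_eq ▸ Finset.subset_union_left
  have hQR : Q.events ⊆ R.events := hg.events_eq ▸ Finset.subset_union_right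
  have hinj : Set.InjOn k R.events := fun a ha b hb => hk.inj a ha b hb
  set P' := P.map k R'.lab (hinj.mono hPR)
  set Q' := Q.map k R'.lab (hinj.mono hQR)
  have hkP : IsIpoIso P P' k := Ipomset.isIpoIso_map (hinj.mono hPR)
    fun a ha => (hk.lab_eq a (hPR ha)).trans (hg.lab_left ha)
  have hkQ : IsIpoIso Q Q' k := Ipomset.isIpoIso_map (hinj.mono hQR)
    fun a ha => (hk.lab_eq a (hQR ha)).trans (hg.lab_right ha)
  have hR'_iff : ∀ {x}, x ∈ R'.events ↔ x ∈ P'.events ∨ x ∈ Q'.events := by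
    intro x
    show x ∈ R'.events ↔ x ∈ P.events.image k ∨ x ∈ Q.events.image k
    rw [← Finset.mem_union, ← Finset.image_union, ← hg.events_eq, ← hk.events_image]
  refine ⟨P', Q', hkP, hkQ, hg.composable.of_isIpoIso hkP hkQ fun a ha b hb =>
    hinj (hPR ha) (hQR hb), ?_, hk.rel_iff (fun x y h => ?_) (fun a ha b hb => ?_),
    hk.rel_iff (fun x y h => ?_) (fun a ha b hb => ?_), ?_, ?_, fun _ _ => rfl, fun _ _ => rfl⟩
  · ext x
    rw [hR'_iff, Finset.mem_union]
  · exact h.elim R'.lt_mem fun h => ⟨hR'_iff.mpr (glueLt_mem h).1, hR'_iff.mpr (glueLt_mem h).2⟩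
  · rw [hk.lt_iff a ha b hb, hg.lt_iff, glueLt_map_iff hkP hkQ
      (fun x hx y hy => hinj (hg.mem_iff.mpr hx) (hg.mem_iff.mpr hy)) (hg.mem_iff.mp ha)
      (hg.mem_iff.mp hb)]
  · refine h.elim R'.evord_mem fun h => h.elim (fun h => ?_) (fun h => ?_)
    · exact ⟨hR'_iff.mpr (.inl (P'.evord_mem h).1), hR'_iff.mpr (.inl (P'.evord_mem h).2)⟩
    · exact ⟨hR'_iff.mpr (.inr (Q'.evord_mem h).1), hR'_iff.mpr (.inr (Q'.evord_mem h).2)⟩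
  · rw [hk.evord_iff_of_sharp hR hR' ha hb, hg.evord_iff]
    refine or_congr ?_ ?_
    · exact (iff_and_self.mpr fun h => ⟨(P.evord_mem h).1, (P.evord_mem h).2⟩).trans
        (and_assoc.trans (Ipomset.map_rel_iff hinj hPR ha hb).symm)
    · exact (iff_and_self.mpr fun h => ⟨(Q.evord_mem h).1, (Q.evord_mem h).2⟩).trans
        (and_assoc.trans (Ipomset.map_rel_iff hinj hQR ha hb).symm)
  · rw [hk.src_image, hg.src_eq]
    rfl
  · rw [hk.tgt_image, hg.tgt_eq]
    rfl

end Transport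

section Assoc

variable [DecidableEq E] {P Q R Z G Y X : Ipomset E A} {x y : E}

theorem glueLt_assoc (hG : IsGlueOf P Q G) (hY : IsGlueOf Q Z Y) :
    glueLt P Y x y ↔ glueLt G Z x y := by
  obtain ⟨hPQ, hGev, hGlt, -, -, hGtgt, -⟩ := hG
  obtain ⟨hQZ, hYev, hYlt, -, hYsrc, -, -⟩ := hY
  constructor
  · refine TransGen.closed (fun a b hab => ?_) x y
    rcases hab with h | h | ⟨ha, hat, hb, hbs⟩
    · exact .single (.inl ((hGlt a b).mpr (.single (.inl h))))
    · refine TransGen.closed (fun c d hcd => ?_) a b ((hYlt a b).mp h)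
      rcases hcd with h | h | ⟨hc, hct, hd, hds⟩
      · exact .single (.inl ((hGlt c d).mpr (.single (.inr (.inl h)))))
      · exact .single (.inr (.inl h))
      · exact .single (.inr (.inr ⟨hGev ▸ Finset.mem_union_right _ hc, hGtgt ▸ hct, hd, hds⟩))
    · rw [hYsrc] at hbs
      rw [hYev, Finset.mem_union] at hb
      by_cases hbQ : b ∈ Q.events
      · exact .single (.inl ((hGlt a b).mpr (.single (.inr (.inr ⟨ha, hat, hbQ, hbs⟩)))))
      · refine .single (.inr (.inr ⟨hGev ▸ Finset.mem_union_left _ ha, ?_,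
          hb.resolve_left hbQ, fun h => hbQ (Q.tgt_sub (hQZ.tgt_eq_src ▸ h))⟩))
        exact hGtgt ▸ fun h => hat (hPQ.mem_tgt ha (Q.tgt_sub h))
  · refine TransGen.closed (fun a b hab => ?_) x y
    rcases hab with h | h | ⟨ha, hat, hb, hbs⟩
    · refine TransGen.closed (fun c d hcd => ?_) a b ((hGlt a b).mp h)
      rcases hcd with h | h | ⟨hc, hct, hd, hds⟩
      · exact .single (.inl h)
      · exact .single (.inr (.inl ((hYlt c d).mpr (.single (.inl h)))))
      · exact .single (.inr (.inr ⟨hc, hct, hYev ▸ Finset.mem_union_left _ hd, hYsrc ▸ hds⟩))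
    · exact .single (.inr (.inl ((hYlt a b).mpr (.single (.inr (.inl h))))))
    · rw [hGtgt] at hat
      rw [hGev, Finset.mem_union] at ha
      by_cases haQ : a ∈ Q.events
      · exact .single (.inr (.inl ((hYlt a b).mpr (.single (.inr (.inr ⟨haQ, hat, hb, hbs⟩))))))
      · exact .single (.inr (.inr ⟨ha.resolve_right haQ,
          fun h => haQ (Q.src_sub (hPQ.tgt_eq_src ▸ h)), hYev ▸ Finset.mem_union_right _ hb,
          hYsrc ▸ fun h => hbs (hQZ.mem_src (Q.src_sub h) hb)⟩))

theorem IsGlueOf.composable_of_right (hY : IsGlueOf Q Z Y) (hX : IsGlueOf P Y X) :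
    Composable P Q := by
  refine ⟨hX.composable.1.trans hY.srcIface_eq, Finset.Subset.antisymm (fun x hx => ?_) ?_⟩
  · obtain ⟨hxP, hxQ⟩ := Finset.mem_inter.mp hx
    exact hX.composable.mem_tgt hxP (hY.mem_iff.mpr (.inl hxQ))
  · intro x hx
    have hxQ : x ∈ Q.src := hY.src_eq ▸ hX.composable.tgt_eq_src ▸ hx
    exact Finset.mem_inter.mpr ⟨P.tgt_sub hx, Q.src_sub hxQ⟩

theorem IsGlueOf.composable_of_left (hG : IsGlueOf P Q G) (hX : IsGlueOf G Z X) :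
    Composable Q Z := by
  refine ⟨hG.tgtIface_eq.symm.trans hX.composable.1, Finset.Subset.antisymm (fun x hx => ?_) ?_⟩
  · obtain ⟨hxQ, hxZ⟩ := Finset.mem_inter.mp hx
    exact hG.tgt_eq ▸ hX.composable.mem_tgt (hG.mem_iff.mpr (.inr hxQ)) hxZ
  · intro x hx
    have hxZ : x ∈ Z.src := hX.composable.tgt_eq_src ▸ hG.tgt_eq ▸ hx
    exact Finset.mem_inter.mpr ⟨Q.tgt_sub hx, Z.src_sub hxZ⟩

theorem IsGlueOf.assoc_left (hY : IsGlueOf Q Z Y) (hX : IsGlueOf P Y X) :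
    ∃ G, IsGlueOf P Q G ∧ IsGlueOf G Z X := by
  have hPQ := hY.composable_of_right hX
  have hQZ := hY.composable
  have memQ : ∀ {x}, x ∈ P.events ∨ x ∈ Q.events → x ∈ Z.events → x ∈ Q.events :=
    fun hx hxZ => hx.elim (fun hxP => Q.src_sub (hY.src_eq ▸
      hX.composable.mem_src hxP (hY.mem_iff.mpr (.inr hxZ)))) id
  have htr : ∀ {x y z}, glueEvord P Q x y → glueEvord P Q y z → glueEvord P Q x z := by
    intro x y z hxy hyz
    have emb : ∀ {a b}, glueEvord P Q a b → X.evord a b := fun h =>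
      h.elim hX.evord_of_evord_left fun h => hX.evord_of_evord_right (hY.evord_of_evord_left h)
    rcases hX.evord_iff.mp (X.evord_trans (emb hxy) (emb hyz)) with h | h
    · exact .inl h
    rcases hY.evord_iff.mp h with h | h
    · exact .inr h
    have hx := memQ (hxy.imp (fun h => (P.evord_mem h).1) fun h => (Q.evord_mem h).1)
      (Z.evord_mem h).1
    have hz := memQ (hyz.imp (fun h => (P.evord_mem h).2) fun h => (Q.evord_mem h).2)
      (Z.evord_mem h).2
    exact .inr ((hQZ.evord_iff (hQZ.mem_tgt hx (Z.evord_mem h).1)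
      (hQZ.mem_tgt hz (Z.evord_mem h).2)).mpr h)
  have hG := isGlueOf_glueOf hPQ htr
  refine ⟨_, hG, ⟨hG.tgtIface_eq.trans hQZ.1, ?_⟩, ?_, fun x y => ?_, fun x y => ?_,
    hX.src_eq, hX.tgt_eq.trans hY.tgt_eq, fun x hx => ?_, fun x hx => ?_⟩
  · refine Finset.Subset.antisymm (fun x hx => ?_) fun x hx => Finset.mem_inter.mpr
      ⟨hG.mem_iff.mpr (.inr (Q.tgt_sub hx)), Z.src_sub (hQZ.tgt_eq_src ▸ hx)⟩
    obtain ⟨hxG, hxZ⟩ := Finset.mem_inter.mp hx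
    exact hQZ.mem_tgt (memQ (hG.mem_iff.mp hxG) hxZ) hxZ
  · rw [hX.events_eq, hY.events_eq, hG.events_eq, Finset.union_assoc]
  · exact hX.lt_iff.trans (glueLt_assoc hG hY)
  · rw [hX.evord_iff, glueEvord, hY.evord_iff]
    exact or_assoc.symm
  · rcases hG.mem_iff.mp hx with hx | hx
    · rw [hX.lab_left hx, hG.lab_left hx]
    · rw [hX.lab_right (hY.mem_iff.mpr (.inl hx)), hY.lab_left hx, hG.lab_right hx]
  · rw [hX.lab_right (hY.mem_iff.mpr (.inr hx)), hY.lab_right hx]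

theorem IsGlueOf.assoc_right (hG : IsGlueOf P Q G) (hX : IsGlueOf G Z X) :
    ∃ Y, IsGlueOf Q Z Y ∧ IsGlueOf P Y X := by
  have hPQ := hG.composable
  have hQZ := hG.composable_of_left hX
  have memQ : ∀ {x}, x ∈ Q.events ∨ x ∈ Z.events → x ∈ P.events → x ∈ Q.events :=
    fun hx hxP => hx.elim id fun hxZ => Q.tgt_sub (hG.tgt_eq ▸
      hX.composable.mem_tgt (hG.mem_iff.mpr (.inl hxP)) hxZ)
  have htr : ∀ {x y z}, glueEvord Q Z x y → glueEvord Q Z y z → glueEvord Q Z x z := by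
    intro x y z hxy hyz
    have emb : ∀ {a b}, glueEvord Q Z a b → X.evord a b := fun h =>
      h.elim (fun h => hX.evord_of_evord_left (hG.evord_of_evord_right h))
        hX.evord_of_evord_right
    rcases hX.evord_iff.mp (X.evord_trans (emb hxy) (emb hyz)) with h | h
    · rcases hG.evord_iff.mp h with h | h
      · have hx := memQ (hxy.imp (fun h => (Q.evord_mem h).1) fun h => (Z.evord_mem h).1)
          (P.evord_mem h).1
        have hz := memQ (hyz.imp (fun h => (Q.evord_mem h).2) fun h => (Z.evord_mem h).2)
          (P.evord_mem h).2
        exact .inl ((hPQ.evord_iff (hPQ.mem_tgt (P.evord_mem h).1 hx)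
          (hPQ.mem_tgt (P.evord_mem h).2 hz)).mp h)
      · exact .inl h
    · exact .inr h
  have hY := isGlueOf_glueOf hQZ htr
  refine ⟨_, hY, ⟨hPQ.1.trans hY.srcIface_eq.symm, ?_⟩, ?_, fun x y => ?_, fun x y => ?_,
    hX.src_eq.trans hG.src_eq, hX.tgt_eq, fun x hx => ?_, fun x hx => ?_⟩
  · refine Finset.Subset.antisymm (fun x hx => ?_) fun x hx => Finset.mem_inter.mpr
      ⟨P.tgt_sub hx, hY.mem_iff.mpr (.inl (Q.src_sub (hPQ.tgt_eq_src ▸ hx)))⟩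
    obtain ⟨hxP, hxY⟩ := Finset.mem_inter.mp hx
    exact hPQ.mem_tgt hxP (memQ (hY.mem_iff.mp hxY) hxP)
  · rw [hX.events_eq, hY.events_eq, hG.events_eq, Finset.union_assoc]
  · exact hX.lt_iff.trans (glueLt_assoc hG hY).symm
  · rw [hX.evord_iff, glueEvord, hG.evord_iff]
    exact or_assoc
  · rw [hX.lab_left (hG.mem_iff.mpr (.inl hx)), hG.lab_left hx]
  · rcases hY.mem_iff.mp hx with hx | hx
    · rw [hX.lab_left (hG.mem_iff.mpr (.inr hx)), hG.lab_right hx, hY.lab_left hx]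
    · rw [hX.lab_right hx, hY.lab_right hx]

end Assoc

section GluingAssoc

variable [DecidableEq E] {P Q R Z Y X : Ipomset E A}

theorem IsGluing.assoc_left (hP : P.Sharpenable) (hQ : Q.Sharpenable) (hZ : Z.Sharpenable)
    (hR : IsGluing P Q R) (hY : IsGluing Q Z Y) (hX : IsGluing P Y X) :
    ∃ W, IsGluing R Z W ∧ IpoIso X W := by
  obtain ⟨Q₁, Z₁, Y₁, iQ₁, iZ₁, iY₁, gY₁⟩ := hY
  obtain ⟨P₂, Y₂, X₂, iP₂, iY₂, iX₂, gX₂⟩ := hX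
  have hQ₁ := hQ.of_ipoIso iQ₁
  have hZ₁ := hZ.of_ipoIso iZ₁
  have hY₁ := gY₁.sharpenable hQ₁ hZ₁
  have hP₂ := hP.of_ipoIso iP₂
  have hY₂ := hY₁.of_ipoIso (iY₁.symm.trans iY₂)
  have hX₂ := gX₂.sharpenable hP₂ hY₂
  obtain ⟨k, hk⟩ : IpoIso (Y₁.sharpen hY₁) (Y₂.sharpen hY₂) :=
    (Y₁.ipoIso_sharpen hY₁).symm.trans ((iY₁.symm.trans iY₂).trans (Y₂.ipoIso_sharpen hY₂))
  obtain ⟨Q₃, Z₃, hkQ, hkZ, gY₃⟩ := (gY₁.sharpen hQ₁ hZ₁ hY₁).transport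
    (Y₁.sharp_sharpen hY₁) (Y₂.sharp_sharpen hY₂) hk
  obtain ⟨G, gG, gX⟩ := gY₃.assoc_left (gX₂.sharpen hP₂ hY₂ hX₂)
  refine ⟨_, ⟨G, Z₃, _, hR.ipoIso gG.isGluing ?_ ?_, ?_, .refl _, gX⟩,
    iX₂.trans (X₂.ipoIso_sharpen hX₂)⟩
  · exact iP₂.trans (P₂.ipoIso_sharpen hP₂)
  · exact iQ₁.trans ((Q₁.ipoIso_sharpen hQ₁).trans ⟨k, hkQ⟩)
  · exact iZ₁.trans ((Z₁.ipoIso_sharpen hZ₁).trans ⟨k, hkZ⟩)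

theorem IsGluing.assoc_right (hP : P.Sharpenable) (hQ : Q.Sharpenable) (hZ : Z.Sharpenable)
    (hR : IsGluing P Q R) (hX : IsGluing R Z X) :
    ∃ Y W, IsGluing Q Z Y ∧ IsGluing P Y W ∧ IpoIso X W := by
  obtain ⟨P₁, Q₁, R₁, iP₁, iQ₁, iR₁, gR₁⟩ := hR
  obtain ⟨R₂, Z₂, X₂, iR₂, iZ₂, iX₂, gX₂⟩ := hX
  have hP₁ := hP.of_ipoIso iP₁
  have hQ₁ := hQ.of_ipoIso iQ₁
  have hR₁ := gR₁.sharpenable hP₁ hQ₁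
  have hR₂ := hR₁.of_ipoIso (iR₁.symm.trans iR₂)
  have hZ₂ := hZ.of_ipoIso iZ₂
  have hX₂ := gX₂.sharpenable hR₂ hZ₂
  obtain ⟨k, hk⟩ : IpoIso (R₁.sharpen hR₁) (R₂.sharpen hR₂) :=
    (R₁.ipoIso_sharpen hR₁).symm.trans ((iR₁.symm.trans iR₂).trans (R₂.ipoIso_sharpen hR₂))
  obtain ⟨P₃, Q₃, hkP, hkQ, gR₃⟩ := (gR₁.sharpen hP₁ hQ₁ hR₁).transport
    (R₁.sharp_sharpen hR₁) (R₂.sharp_sharpen hR₂) hk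
  obtain ⟨Y, gY, gX⟩ := gR₃.assoc_right (gX₂.sharpen hR₂ hZ₂ hX₂)
  refine ⟨Y, _, ⟨Q₃, _, Y, ?_, iZ₂.trans (Z₂.ipoIso_sharpen hZ₂), .refl Y, gY⟩,
    ⟨P₃, Y, _, ?_, .refl Y, .refl _, gX⟩, iX₂.trans (X₂.ipoIso_sharpen hX₂)⟩
  · exact iQ₁.trans ((Q₁.ipoIso_sharpen hQ₁).trans ⟨k, hkQ⟩)
  · exact iP₁.trans ((P₁.ipoIso_sharpen hP₁).trans ⟨k, hkP⟩)

end GluingAssoc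

section Identity

variable {P Q Z : Ipomset E A}

def Ipomset.idOn (Z : Ipomset E A) (S : Finset E) (hS : S ⊆ Z.events)
    (hS' : ∀ x ∈ S, ∀ y ∈ S, ¬ Z.lt x y) : Ipomset E A where
  events := S
  lt _ _ := False
  evord x y := x ∈ S ∧ y ∈ S ∧ Z.evord x y
  src := S
  tgt := S
  lab := Z.lab
  lt_mem h := h.elim
  evord_mem h := ⟨h.1, h.2.1⟩
  lt_irrefl _ h := h
  lt_trans h := h.elim
  evord_irrefl x h := Z.evord_irrefl x h.2.2
  evord_trans h h' := ⟨h.1, h'.2.1, Z.evord_trans h.2.2 h'.2.2⟩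
  order_total {x y} hx hy hxy := by
    rcases Z.order_total (hS hx) (hS hy) hxy with h | h | h | h
    · exact absurd h (hS' x hx y hy)
    · exact absurd h (hS' y hy x hx)
    · exact .inr (.inr (.inl ⟨hx, hy, h⟩))
    · exact .inr (.inr (.inr ⟨hy, hx, h⟩))
  src_sub := subset_rfl
  tgt_sub := subset_rfl
  src_min _ h := h
  tgt_max _ h := h

theorem Ipomset.isIdentity_idOn {S : Finset E} {hS hS'} : (Z.idOn S hS hS').IsIdentity :=
  ⟨fun _ _ h => h, rfl, rfl⟩

variable [DecidableEq E] {Y : Ipomset E A}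

theorem Ipomset.IsIdentity.tgtIface_eq_srcIface (hP : P.IsIdentity) :
    P.tgtIface = P.srcIface :=
  Ipomset.tgtIface_eq_srcIface (hP.2.2.trans hP.2.1.symm) (fun _ _ _ _ => Iff.rfl)
    fun _ _ => rfl

theorem Ipomset.IsIdentity.ipoIso_of_clIso (hP : P.IsIdentity) (hQ : Q.IsIdentity)
    (h : ClIso P.srcIface Q.srcIface) : IpoIso P Q := by
  obtain ⟨f, hf⟩ := h
  obtain ⟨hPd, hPs, hPt⟩ := hP
  obtain ⟨hQd, hQs, hQt⟩ := hQ
  have hsrc : ∀ {x}, x ∈ P.events → x ∈ P.src := fun hx => hPs ▸ hx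
  have maps : ∀ x ∈ P.events, f x ∈ Q.events := fun x hx => Q.src_sub (hf.maps x (hsrc hx))
  refine ⟨f, maps, fun x hx y hy => hf.inj x (hsrc hx) y (hsrc hy), fun y hy => ?_,
    fun x hx => ?_, fun x hx => ?_, fun x hx => ?_, fun x _ y _ => iff_of_false (hQd _ _)
    (hPd _ _), fun x hx y hy _ _ => ?_⟩
  · obtain ⟨x, hx, rfl⟩ := hf.surj y (hQs ▸ hy : y ∈ Q.src)
    exact ⟨x, P.src_sub hx, rfl⟩
  · rw [hPs, hQs]
    exact iff_of_true hx (maps x hx)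
  · rw [hPt, hQt]
    exact iff_of_true hx (maps x hx)
  · have h := hf.lab_eq x (hsrc hx)
    simp only [Ipomset.srcIface, hPs, hQs, hx, maps x hx, if_true] at h
    exact Option.some.inj h
  · have h := hf.evord_iff x (hsrc hx) y (hsrc hy)
    simp only [Ipomset.srcIface, hPs, hQs, hx, hy, maps x hx, maps y hy, true_and] at h
    exact h

theorem isGlueOf_idOn_src (Z : Ipomset E A) :
    IsGlueOf (Z.idOn Z.src Z.src_sub fun _ _ _ hy => Z.src_min hy) Z Z := by
  have hc : Composable (Z.idOn Z.src Z.src_sub fun _ _ _ hy => Z.src_min hy) Z :=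
    ⟨Ipomset.tgtIface_eq_srcIface rfl (fun _ hx _ hy => ⟨fun h => h.2.2, fun h => ⟨hx, hy, h⟩⟩)
      fun _ _ => rfl,
      Finset.inter_eq_left.mpr Z.src_sub⟩
  refine ⟨hc, (Finset.union_eq_right.mpr Z.src_sub).symm, fun x y => ⟨fun h => .single
    (.inr (.inl h)), fun h => hc.lt_of_glueLt_of_mem_right h ?_⟩, fun x y =>
    ⟨.inr, fun h => h.elim (fun h => h.2.2) id⟩, rfl, rfl, fun _ _ => rfl, fun _ _ => rfl⟩
  exact (glueLt_mem h).1.elim (fun hx => Z.src_sub hx) id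

theorem isGlueOf_idOn_tgt (Z : Ipomset E A) :
    IsGlueOf Z (Z.idOn Z.tgt Z.tgt_sub fun _ hx _ _ => Z.tgt_max hx) Z := by
  have hc : Composable Z (Z.idOn Z.tgt Z.tgt_sub fun _ hx _ _ => Z.tgt_max hx) :=
    ⟨Ipomset.tgtIface_eq_srcIface rfl (fun _ hx _ hy => ⟨fun h => ⟨hx, hy, h⟩, fun h => h.2.2⟩)
      fun _ _ => rfl, Finset.inter_eq_right.mpr Z.tgt_sub⟩
  refine ⟨hc, (Finset.union_eq_left.mpr Z.tgt_sub).symm, fun x y => ⟨fun h => .single (.inl h),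
    fun h => hc.lt_of_glueLt_of_mem_left h ?_⟩, fun x y =>
    ⟨.inl, fun h => h.elim id fun h => h.2.2⟩, rfl, rfl, fun _ _ => rfl, fun _ _ => rfl⟩
  exact (glueLt_mem h).2.elim id fun hy => Z.tgt_sub hy

theorem isGluing_id_left (hP : P.IsIdentity) (h : ClIso P.tgtIface Z.srcIface) :
    IsGluing P Z Z := by
  have hI := isGlueOf_idOn_src Z
  refine ⟨_, Z, Z, hP.ipoIso_of_clIso Ipomset.isIdentity_idOn ?_, .refl Z, .refl Z, hI⟩
  rw [← hP.tgtIface_eq_srcIface, ← Ipomset.isIdentity_idOn.tgtIface_eq_srcIface,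
    hI.composable.1]
  exact h

theorem isGluing_id_right (hP : P.IsIdentity) (h : ClIso Z.tgtIface P.srcIface) :
    IsGluing Z P Z := by
  have hJ := isGlueOf_idOn_tgt Z
  refine ⟨Z, _, Z, .refl Z, (Ipomset.isIdentity_idOn.ipoIso_of_clIso hP ?_).symm, .refl Z, hJ⟩
  rw [← hJ.composable.1]
  exact h

theorem IsGluing.ipoIso_of_isIdentity_left (h : IsGluing P Z Y) (hP : P.IsIdentity) :
    IpoIso Y Z :=
  h.ipoIso (isGluing_id_left hP h.clIso_tgtIface_srcIface) (.refl P) (.refl Z)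

theorem IsGluing.ipoIso_of_isIdentity_right (h : IsGluing Z P Y) (hP : P.IsIdentity) :
    IpoIso Y Z :=
  h.ipoIso (isGluing_id_right hP h.clIso_tgtIface_srcIface) (.refl Z) (.refl P)

end Identity

section Transfer

variable [DecidableEq E] {P Q R : Ipomset E A} {u v w w' : List (Ipomset E A)}

theorem glueTransfer_replace (h : IpoIso P Q) (v : List (Ipomset E A)) :
    GlueTransfer (P :: v) (Q :: v) := by
  intro R hR
  rcases v with _ | ⟨_, v⟩
  · obtain rfl := glueWord_singleton_iff.mp hR
    exact ⟨Q, .single Q, h⟩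
  · obtain ⟨M, hM, hg⟩ := glueWord_cons_cons_iff.mp hR
    exact ⟨R, glueWord_cons_cons_iff.mpr ⟨M, hM, hg.congr h (.refl M) (.refl R)⟩, .refl R⟩

theorem glueTransfer_erase_id_left (hP : P.IsIdentity) :
    GlueTransfer (P :: Q :: v) (Q :: v) := by
  intro R hR
  obtain ⟨M, hM, hg⟩ := glueWord_cons_cons_iff.mp hR
  exact ⟨M, hM, hg.ipoIso_of_isIdentity_left hP⟩

theorem glueTransfer_insert_id_left (hP : P.IsIdentity) (h : ClIso P.tgtIface Q.srcIface) :
    GlueTransfer (Q :: v) (P :: Q :: v) := fun R hR =>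
  ⟨R, glueWord_cons_cons_iff.mpr ⟨R, hR, isGluing_id_left hP (h.trans hR.clIso_srcIface)⟩,
    .refl R⟩

theorem glueTransfer_erase_id_right (hP : P.IsIdentity) : GlueTransfer [Q, P] [Q] := by
  intro R hR
  obtain ⟨M, hM, hg⟩ := glueWord_cons_cons_iff.mp hR
  obtain rfl := glueWord_singleton_iff.mp hM
  exact ⟨Q, .single Q, hg.ipoIso_of_isIdentity_right hP⟩

theorem glueTransfer_insert_id_right (hP : P.IsIdentity) (h : ClIso Q.tgtIface P.srcIface) :
    GlueTransfer [Q] [Q, P] := by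
  intro R hR
  obtain rfl := glueWord_singleton_iff.mp hR
  exact ⟨R, glueWord_cons_cons_iff.mpr ⟨P, .single P, isGluing_id_right hP h⟩, .refl R⟩

theorem glueTransfer_merge (hP : P.Sharpenable) (hQ : Q.Sharpenable) (hPQ : IsGluing P Q R)
    (hv : ∀ T ∈ v, StepLetter T) : GlueTransfer (P :: Q :: v) (R :: v) := by
  intro S hS
  obtain ⟨M, hM, hPM⟩ := glueWord_cons_cons_iff.mp hS
  rcases v with _ | ⟨_, v⟩
  · obtain rfl := glueWord_singleton_iff.mp hM
    exact ⟨R, .single R, hPM.ipoIso hPQ (.refl P) (.refl M)⟩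
  · obtain ⟨N, hN, hQN⟩ := glueWord_cons_cons_iff.mp hM
    obtain ⟨W, hRN, hSW⟩ := hPQ.assoc_left hP hQ (hN.sharpenable hv) hQN hPM
    exact ⟨W, glueWord_cons_cons_iff.mpr ⟨N, hN, hRN⟩, hSW⟩

theorem glueTransfer_split (hP : P.Sharpenable) (hQ : Q.Sharpenable) (hPQ : IsGluing P Q R)
    (hv : ∀ T ∈ v, StepLetter T) : GlueTransfer (R :: v) (P :: Q :: v) := by
  intro S hS
  rcases v with _ | ⟨_, v⟩
  · obtain rfl := glueWord_singleton_iff.mp hS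
    exact ⟨S, glueWord_cons_cons_iff.mpr ⟨Q, .single Q, hPQ⟩, .refl S⟩
  · obtain ⟨N, hN, hRN⟩ := glueWord_cons_cons_iff.mp hS
    obtain ⟨Y, W, hQN, hPY, hSW⟩ := hPQ.assoc_right hP hQ (hN.sharpenable hv) hRN
    exact ⟨W, glueWord_cons_cons_iff.mpr ⟨Y, glueWord_cons_cons_iff.mpr ⟨N, hN, hQN⟩, hPY⟩, hSW⟩

theorem Coherent.clIso_of_append (h : Coherent (u ++ P :: Q :: v)) :
    ClIso P.tgtIface Q.srcIface :=
  (List.isChain_cons_cons.mp (List.isChain_append.mp h.2).2.1).1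

theorem StepEquiv.glueTransfer (h : StepEquiv w w') : GlueTransfer w w' ∧ GlueTransfer w' w := by
  induction h with
  | glue u v P Q R hco hst hPQ =>
    have hP : P.Sharpenable := .of_discrete (hst.elim (·.1.1) (·.1.1))
    have hQ : Q.Sharpenable := .of_discrete (hst.elim (·.2.1) (·.2.1))
    have hv : ∀ T ∈ v, StepLetter T := fun T hT => hco.1 T (by simp [hT])
    exact ⟨(glueTransfer_merge hP hQ hPQ hv).append_left u (by simp),
      (glueTransfer_split hP hQ hPQ hv).append_left u (by simp)⟩
  | ident u v P hco hP hne =>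
    rcases v with _ | ⟨Q, v⟩
    · -- `P` is the last letter: treat it together with the letter `Q` before it.
      obtain ⟨u, Q, rfl⟩ := (List.eq_nil_or_concat u).resolve_left (by simpa using hne)
      have hQP : ClIso Q.tgtIface P.srcIface :=
        Coherent.clIso_of_append (u := u) (v := []) (by simpa using hco)
      simpa using ⟨(glueTransfer_erase_id_right hP).append_left u (by simp),
        (glueTransfer_insert_id_right hP hQP).append_left u (by simp)⟩
    · exact ⟨(glueTransfer_erase_id_left hP).append_left u (by simp),
        (glueTransfer_insert_id_left hP hco.clIso_of_append).append_left u (by simp)⟩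
  | iso u v P Q _ hPQ =>
    exact ⟨(glueTransfer_replace hPQ v).append_left u (by simp),
      (glueTransfer_replace hPQ.symm v).append_left u (by simp)⟩
  | refl w => exact ⟨.refl w, .refl w⟩
  | symm _ ih => exact ih.symm
  | trans _ _ ih ih' => exact ⟨ih.1.trans ih'.1, ih'.2.trans ih.2⟩

end Transfer

theorem stepEquiv_gluings_iso_general [DecidableEq E]
    (w₁ w₂ : List (Ipomset E A))
    (he : StepEquiv w₁ w₂) (R₁ R₂ : Ipomset E A)
    (g₁ : GlueWord w₁ R₁) (g₂ : GlueWord w₂ R₂) :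
    IpoIso R₁ R₂ := by
  obtain ⟨R₂', g₂', hR⟩ := he.glueTransfer.1 R₁ g₁
  exact hR.trans (g₂'.ipoIso g₂)

/-- If coherent words of starters and terminators are equivalent
under the congruence `~`, then their gluings agree up to isomorphism. -/
theorem stepEquiv_gluings_iso [DecidableEq E]
    (w₁ w₂ : List (Ipomset E A)) (h₁ : Coherent w₁) (h₂ : Coherent w₂)
    (he : StepEquiv w₁ w₂) (R₁ R₂ : Ipomset E A)
    (g₁ : GlueWord w₁ R₁) (g₂ : GlueWord w₂ R₂) :
    IpoIso R₁ R₂ :=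
  stepEquiv_gluings_iso_general w₁ w₂ he R₁ R₂ g₁ g₂
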